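/- arXiv:2001.06636 — 5 statements merged into one kernel-verified Lean document; each statement's English description precedes it below -/
import Mathlib

section
/- Let Σ = (X, Y, M(U), φ, h) be a linear control system that is exponentially stable with constants M, σ > 0 and robust with respect to the input with nondecreasing function b. Then for every T > (1/σ)·ln(M), every x ∈ X, every u ∈ M(U) and every t ≥ 0, ‖φ(t,x,u)‖_X ≤ M·exp(−(σ − T⁻¹·ln(M))·t)·‖x‖_X + sup_{0≤r<T}( M·e^{−σr}·b(T)/(1 − M·e^{−σT}) + b(r) ) · sup_{0≤s≤t}‖u(s)‖_U. In particular Σ is exponentially input-to-state stable. -/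
/-!
Split `φ(t,x,u) = φ(t,x,0) + φ(t,0,u)`. For the zero-state part put `q = M e^{-σT} < 1` and
`S = sup_{[0,t]} ‖u‖`: by the semigroup property, ES and robustness,
`‖φ((n+1)T,0,u)‖ ≤ q ‖φ(nT,0,u)‖ + b(T) S`, hence `‖φ(nT,0,u)‖ ≤ b(T) S / (1 - q)` for `nT ≤ t`;
one more step of length `r = t - nT ∈ [0,T)` gives the gain. If `X ≠ 0`, ES at `t = 0` forces
`M ≥ 1`, so `ln M ≥ 0`, `T > 0` and `e^{-σt} ≤ e^{-(σ - T⁻¹ ln M)t}`; if `X = 0` there is nothing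
to prove.
-/

open Filter

noncomputable section

/-- A linear control system `Σ = (X, Y, M(U), φ, h)` in the sense of
Karafyllis, "On the Relation of IOS-Gains and Asymptotic Gains For Linear Systems".
Inputs are functions `u : ℝ → U`; only values on `[0, ∞)` are relevant. -/
structure LinearControlSystem (X Y U : Type*)
    [NormedAddCommGroup X] [NormedSpace ℝ X]
    [NormedAddCommGroup Y] [NormedSpace ℝ Y]
    [NormedAddCommGroup U] [NormedSpace ℝ U] where
  /-- the set `M(U)` of admissible inputs -/
  inputs : Set (ℝ → U)
  /-- the transition map `φ` -/
  trans : ℝ → X → (ℝ → U) → X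
  /-- the continuous linear output map `h : X → Y` -/
  out : X →L[ℝ] Y
  /-- `U ≠ {0}` -/
  U_nontrivial : ∃ v : U, v ≠ 0
  /-- inputs are locally bounded -/
  loc_bdd : ∀ u ∈ inputs, ∀ T : ℝ, BddAbove ((fun s => ‖u s‖) '' Set.Icc 0 T)
  zero_mem : (0 : ℝ → U) ∈ inputs
  add_mem : ∀ u₁ ∈ inputs, ∀ u₂ ∈ inputs, u₁ + u₂ ∈ inputs
  smul_mem : ∀ u ∈ inputs, ∀ c : ℝ, c • u ∈ inputs
  concat_le_mem : ∀ u₁ ∈ inputs, ∀ u₂ ∈ inputs, ∀ τ > (0 : ℝ),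
    (fun t => if t ≤ τ then u₁ t else u₂ (t - τ)) ∈ inputs
  concat_lt_mem : ∀ u₁ ∈ inputs, ∀ u₂ ∈ inputs, ∀ τ > (0 : ℝ),
    (fun t => if t < τ then u₁ t else u₂ (t - τ)) ∈ inputs
  /-- closure under the shift operator `δ_τ` -/
  shift_mem : ∀ u ∈ inputs, ∀ τ > (0 : ℝ), (fun t => u (t + τ)) ∈ inputs
  exists_input_val : ∀ v : U, ∃ u ∈ inputs, u 0 = v
  /-- closure under `T`-periodic extension -/
  periodic_ext_mem : ∀ u ∈ inputs, ∀ T > (0 : ℝ),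
    (fun t => u (t - T * ⌊t / T⌋)) ∈ inputs
  identity : ∀ x : X, ∀ u ∈ inputs, trans 0 x u = x
  causality : ∀ t ≥ (0 : ℝ), ∀ x : X, ∀ u ∈ inputs, ∀ v ∈ inputs,
    (∀ s, 0 ≤ s → s ≤ t → u s = v s) → trans t x u = trans t x v
  semigroup : ∀ x : X, ∀ u ∈ inputs, ∀ τ t : ℝ, 0 ≤ τ → τ ≤ t →
    trans t x u = trans (t - τ) (trans τ x u) (fun s => u (s + τ))
  linearity : ∀ t ≥ (0 : ℝ), ∀ x₁ x₂ : X, ∀ u₁ ∈ inputs, ∀ u₂ ∈ inputs, ∀ a b : ℝ,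
    trans t (a • x₁ + b • x₂) (a • u₁ + b • u₂) = a • trans t x₁ u₁ + b • trans t x₂ u₂

namespace LinearControlSystem

variable {X Y U : Type*}
    [NormedAddCommGroup X] [NormedSpace ℝ X]
    [NormedAddCommGroup Y] [NormedSpace ℝ Y]
    [NormedAddCommGroup U] [NormedSpace ℝ U]

/-- `sup_{0 ≤ s ≤ t} ‖u(s)‖`. -/
def runSup (u : ℝ → U) (t : ℝ) : ℝ :=
  sSup ((fun s => ‖u s‖) '' Set.Icc 0 t)

/-- `sup_{s ≥ 0} ‖u(s)‖`. -/
def supNorm (u : ℝ → U) : ℝ :=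
  sSup ((fun s => ‖u s‖) '' Set.Ici 0)

/-- exponential stability with the specific constants `M, σ > 0` -/
def IsES (sys : LinearControlSystem X Y U) (M σ : ℝ) : Prop :=
  0 < M ∧ 0 < σ ∧ ∀ x : X, ∀ t ≥ (0 : ℝ),
    ‖sys.trans t x 0‖ ≤ M * Real.exp (-σ * t) * ‖x‖

/-- exponential stability (ES) -/
def ES (sys : LinearControlSystem X Y U) : Prop :=
  ∃ M σ : ℝ, sys.IsES M σ

/-- robustness with respect to the input, with the specific nondecreasing function `b` -/
def IsRobust (sys : LinearControlSystem X Y U) (b : ℝ → ℝ) : Prop :=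
  MonotoneOn b (Set.Ici 0) ∧ (∀ t, 0 ≤ b t) ∧
    ∀ u ∈ sys.inputs, ∀ t ≥ (0 : ℝ), ‖sys.trans t 0 u‖ ≤ b t * runSup u t

/-- robustness with respect to the input -/
def Robust (sys : LinearControlSystem X Y U) : Prop :=
  ∃ b : ℝ → ℝ, sys.IsRobust b

/-- strict causality -/
def StrictlyCausal (sys : LinearControlSystem X Y U) : Prop :=
  ∀ t > (0 : ℝ), ∀ u ∈ sys.inputs, ∀ v ∈ sys.inputs,
    (∀ s, 0 ≤ s → s < t → u s = v s) → sys.trans t 0 u = sys.trans t 0 v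

/-- the minimum IOS-gain `γ` -/
def gain (sys : LinearControlSystem X Y U) : ℝ :=
  sSup {r | ∃ t ≥ (0 : ℝ), ∃ u ∈ sys.inputs, runSup u t = 1 ∧ r = ‖sys.out (sys.trans t 0 u)‖}

/-- the minimum output asymptotic gain `γ_as` -/
def asympGain (sys : LinearControlSystem X Y U) : ℝ :=
  sSup {r | ∃ u ∈ sys.inputs, supNorm u = 1 ∧
    r = limsup (fun t => ‖sys.out (sys.trans t 0 u)‖) atTop}

/-- the value `V(T)` of the optimal control problem (4.5) -/
def V (sys : LinearControlSystem X Y U) (T : ℝ) : ℝ :=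
  sSup {r | ∃ u ∈ sys.inputs, runSup u T = 1 ∧ r = ‖sys.out (sys.trans T 0 u)‖}

/-- periodic inputs -/
def Periodic (u : ℝ → U) : Prop :=
  ∃ T > (0 : ℝ), ∀ t ≥ (0 : ℝ), u (t + T) = u t

end LinearControlSystem

open Real Set

def issGain (M σ : ℝ) (b : ℝ → ℝ) (T : ℝ) : ℝ :=
  sSup ((fun r => M * exp (-σ * r) * b T / (1 - M * exp (-σ * T)) + b r) '' Ico 0 T)

section issGain

variable {M σ T : ℝ} {b : ℝ → ℝ}

theorem log_lt_mul_of_one_div_mul_lt (hσ : 0 < σ) (hT : 1 / σ * log M < T) : log M < σ * T := by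
  rwa [one_div_mul_eq_div, div_lt_iff₀' hσ] at hT

theorem mul_exp_neg_lt_one (hM : 0 < M) (hσ : 0 < σ) (hT : 1 / σ * log M < T) :
    M * exp (-σ * T) < 1 := by
  rw [← exp_log hM, ← exp_add, exp_lt_one_iff]
  linarith [log_lt_mul_of_one_div_mul_lt hσ hT]

theorem issGain_nonneg (hq : M * exp (-σ * T) < 1) (hM : 0 ≤ M) (hb : ∀ t, 0 ≤ b t) :
    0 ≤ issGain M σ b T := by
  refine Real.sSup_nonneg ?_
  rintro _ ⟨r, -, rfl⟩
  have := hb T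
  have := hb r
  have : 0 < 1 - M * exp (-σ * T) := by linarith
  positivity

theorem le_issGain (hq : M * exp (-σ * T) < 1) (hM : 0 ≤ M) (hσ : 0 ≤ σ)
    (hb : MonotoneOn b (Ici 0)) (hb0 : 0 ≤ b T) {r : ℝ} (hr : r ∈ Ico 0 T) :
    M * exp (-σ * r) * b T / (1 - M * exp (-σ * T)) + b r ≤ issGain M σ b T := by
  have h1q : 0 < 1 - M * exp (-σ * T) := by linarith
  refine le_csSup ⟨M * 1 * b T / (1 - M * exp (-σ * T)) + b T, ?_⟩ ⟨r, hr, rfl⟩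
  rintro _ ⟨s, ⟨hs0, hsT⟩, rfl⟩
  have hexp : exp (-σ * s) ≤ 1 := exp_le_one_iff.2 (by nlinarith)
  have hbs : b s ≤ b T := hb hs0 (hs0.trans hsT.le) hsT.le
  dsimp only
  gcongr

end issGain

theorem exists_nat_mul_add_mem_Ico {t T : ℝ} (ht : 0 ≤ t) (hT : 0 < T) :
    ∃ n : ℕ, ∃ r ∈ Ico 0 T, t = n * T + r := by
  refine ⟨⌊t / T⌋₊, t - ⌊t / T⌋₊ * T, ⟨?_, ?_⟩, by ring⟩
  · have := Nat.floor_le (div_nonneg ht hT.le)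
    rw [le_div_iff₀ hT] at this
    linarith
  · have := Nat.lt_floor_add_one (t / T)
    rw [div_lt_iff₀ hT] at this
    linarith

namespace LinearControlSystem

section runSup

variable {U : Type*} [NormedAddCommGroup U]

theorem runSup_nonneg (u : ℝ → U) (t : ℝ) : 0 ≤ runSup u t :=
  Real.sSup_nonneg (by rintro _ ⟨s, -, rfl⟩; exact norm_nonneg _)

theorem runSup_comp_add_le {u : ℝ → U} {τ s t : ℝ}
    (hu : BddAbove ((fun r => ‖u r‖) '' Icc 0 t)) (hτ : 0 ≤ τ) (hs : 0 ≤ s) (hst : τ + s ≤ t) :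
    runSup (fun r => u (r + τ)) s ≤ runSup u t := by
  refine csSup_le_csSup hu ⟨_, 0, ⟨le_rfl, hs⟩, rfl⟩ ?_
  rintro _ ⟨r, ⟨hr0, hrs⟩, rfl⟩
  exact ⟨r + τ, ⟨by linarith, by linarith⟩, rfl⟩

end runSup

variable {X Y U : Type*}
    [NormedAddCommGroup X] [NormedSpace ℝ X]
    [NormedAddCommGroup Y] [NormedSpace ℝ Y]
    [NormedAddCommGroup U] [NormedSpace ℝ U]
    (sys : LinearControlSystem X Y U) {M σ : ℝ} {b : ℝ → ℝ} {u : ℝ → U}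

theorem comp_add_mem (hu : u ∈ sys.inputs) {τ : ℝ} (hτ : 0 ≤ τ) :
    (fun s => u (s + τ)) ∈ sys.inputs := by
  rcases hτ.eq_or_lt with rfl | hτ
  · simpa using hu
  · exact sys.shift_mem u hu τ hτ

theorem trans_eq_add {t : ℝ} (ht : 0 ≤ t) (x : X) (hu : u ∈ sys.inputs) :
    sys.trans t x u = sys.trans t x 0 + sys.trans t 0 u := by
  simpa using sys.linearity t ht x 0 0 sys.zero_mem u hu 1 1

theorem one_le_of_isES (hES : sys.IsES M σ) {x : X} (hx : x ≠ 0) : 1 ≤ M := by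
  have h := hES.2.2 x 0 le_rfl
  rw [sys.identity x 0 sys.zero_mem, mul_zero, exp_zero, mul_one] at h
  exact (le_mul_iff_one_le_left (norm_pos_iff.2 hx)).1 h

theorem norm_trans_add_le (hES : sys.IsES M σ) (hrob : sys.IsRobust b) (hu : u ∈ sys.inputs)
    {τ s t : ℝ} (hτ : 0 ≤ τ) (hs : 0 ≤ s) (hst : τ + s ≤ t) :
    ‖sys.trans (τ + s) 0 u‖ ≤ M * exp (-σ * s) * ‖sys.trans τ 0 u‖ + b s * runSup u t := by
  have hu' := sys.comp_add_mem hu hτ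
  calc ‖sys.trans (τ + s) 0 u‖
      = ‖sys.trans s (sys.trans τ 0 u) 0 + sys.trans s 0 (fun r => u (r + τ))‖ := by
        rw [sys.semigroup 0 u hu τ (τ + s) hτ (by linarith), add_sub_cancel_left,
          sys.trans_eq_add hs _ hu']
    _ ≤ ‖sys.trans s (sys.trans τ 0 u) 0‖ + ‖sys.trans s 0 (fun r => u (r + τ))‖ :=
        norm_add_le _ _
    _ ≤ _ := by
        gcongr
        · exact hES.2.2 _ s hs
        · refine (hrob.2.2 _ hu' s hs).trans ?_
          gcongr
          · exact hrob.2.1 s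
          · exact runSup_comp_add_le (sys.loc_bdd u hu t) hτ hs hst

theorem norm_trans_nat_mul_le (hES : sys.IsES M σ) (hrob : sys.IsRobust b)
    (hu : u ∈ sys.inputs) {T t : ℝ} (hT : 0 ≤ T) (hq : M * exp (-σ * T) < 1) (n : ℕ)
    (hn : n * T ≤ t) :
    ‖sys.trans (n * T) 0 u‖ ≤ b T * runSup u t / (1 - M * exp (-σ * T)) := by
  have h1q : 0 < 1 - M * exp (-σ * T) := by linarith
  have hc : 0 ≤ b T * runSup u t := mul_nonneg (hrob.2.1 T) (runSup_nonneg u t)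
  induction n with
  | zero =>
    rw [Nat.cast_zero, zero_mul, sys.identity 0 u hu, norm_zero]
    positivity
  | succ n ih =>
    have hnT : (n : ℝ) * T ≤ t := by push_cast at hn; nlinarith
    have hq0 : 0 ≤ M * exp (-σ * T) := mul_nonneg hES.1.le (exp_pos _).le
    calc ‖sys.trans ((n + 1 : ℕ) * T) 0 u‖ = ‖sys.trans (n * T + T) 0 u‖ := by
          push_cast; ring_nf
      _ ≤ M * exp (-σ * T) * ‖sys.trans (n * T) 0 u‖ + b T * runSup u t :=
          sys.norm_trans_add_le hES hrob hu (by positivity) hT (by push_cast at hn; linarith)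
      _ ≤ M * exp (-σ * T) * (b T * runSup u t / (1 - M * exp (-σ * T))) + b T * runSup u t := by
          gcongr
          exact ih hnT
      _ = b T * runSup u t / (1 - M * exp (-σ * T)) := by
          generalize M * exp (-σ * T) = q at h1q ⊢
          field_simp
          ring

theorem norm_trans_zero_le_issGain (hES : sys.IsES M σ) (hrob : sys.IsRobust b)
    (hu : u ∈ sys.inputs) {T t : ℝ} (hT : 0 < T) (hq : M * exp (-σ * T) < 1) (ht : 0 ≤ t) :
    ‖sys.trans t 0 u‖ ≤ issGain M σ b T * runSup u t := by
  obtain ⟨n, r, hr, rfl⟩ := exists_nat_mul_add_mem_Ico ht hT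
  have hnT : (0 : ℝ) ≤ n * T := by positivity
  calc ‖sys.trans (n * T + r) 0 u‖
      ≤ M * exp (-σ * r) * ‖sys.trans (n * T) 0 u‖ + b r * runSup u (n * T + r) :=
        sys.norm_trans_add_le hES hrob hu hnT hr.1 le_rfl
    _ ≤ M * exp (-σ * r) * (b T * runSup u (n * T + r) / (1 - M * exp (-σ * T))) +
          b r * runSup u (n * T + r) := by
        have := hES.1
        gcongr
        exact sys.norm_trans_nat_mul_le hES hrob hu hT.le hq n (by linarith [hr.1])
    _ = (M * exp (-σ * r) * b T / (1 - M * exp (-σ * T)) + b r) * runSup u (n * T + r) := by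
        ring
    _ ≤ issGain M σ b T * runSup u (n * T + r) := by
        gcongr
        · exact runSup_nonneg u _
        · exact le_issGain hq hES.1.le hES.2.1.le hrob.1 (hrob.2.1 T) hr

theorem norm_trans_le_issGain (hES : sys.IsES M σ) (hrob : sys.IsRobust b) {T : ℝ}
    (hT : 1 / σ * log M < T) (x : X) (hu : u ∈ sys.inputs) {t : ℝ} (ht : 0 ≤ t) :
    ‖sys.trans t x u‖ ≤
      M * exp (-(σ - T⁻¹ * log M) * t) * ‖x‖ + issGain M σ b T * runSup u t := by
  have hM := hES.1
  have hσ := hES.2.1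
  have hq := mul_exp_neg_lt_one hM hσ hT
  rcases subsingleton_or_nontrivial X with hX | hX
  · rw [Subsingleton.elim (sys.trans t x u) 0, norm_zero]
    have := mul_nonneg (issGain_nonneg hq hM.le hrob.2.1) (runSup_nonneg u t)
    positivity
  obtain ⟨x₀, hx₀⟩ := exists_ne (0 : X)
  have hlog : 0 ≤ log M := log_nonneg (sys.one_le_of_isES hES hx₀)
  have hT0 : 0 < T := lt_of_le_of_lt (by positivity) hT
  calc ‖sys.trans t x u‖ ≤ ‖sys.trans t x 0‖ + ‖sys.trans t 0 u‖ := by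
        rw [sys.trans_eq_add ht x hu]
        exact norm_add_le _ _
    _ ≤ M * exp (-σ * t) * ‖x‖ + issGain M σ b T * runSup u t :=
        add_le_add (hES.2.2 x t ht) (sys.norm_trans_zero_le_issGain hES hrob hu hT0 hq ht)
    _ ≤ _ := by
        have : -σ * t ≤ -(σ - T⁻¹ * log M) * t := by
          have : 0 ≤ T⁻¹ * log M * t := by positivity
          linarith
        gcongr

end LinearControlSystem

open LinearControlSystem in
/-- Theorem 4.1 (estimate (4.17)): an ES linear control system which is robust with respect
to the input satisfies the explicit ISS estimate for every `T > (1/σ)·ln M`; in particular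
it is exponentially input-to-state stable. -/
theorem statement_0 {X Y U : Type*}
    [NormedAddCommGroup X] [NormedSpace ℝ X]
    [NormedAddCommGroup Y] [NormedSpace ℝ Y]
    [NormedAddCommGroup U] [NormedSpace ℝ U]
    (sys : LinearControlSystem X Y U) (M σ : ℝ) (b : ℝ → ℝ)
    (hES : sys.IsES M σ) (hrob : sys.IsRobust b) :
    (∀ T : ℝ, T > (1 / σ) * Real.log M → ∀ x : X, ∀ u ∈ sys.inputs, ∀ t ≥ (0 : ℝ),
      ‖sys.trans t x u‖ ≤ M * Real.exp (-(σ - T⁻¹ * Real.log M) * t) * ‖x‖ +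
        sSup ((fun r => M * Real.exp (-σ * r) * b T / (1 - M * Real.exp (-σ * T)) + b r) ''
            Set.Ico 0 T) * runSup u t) ∧
    (∃ M' σ' g : ℝ, 0 < M' ∧ 0 < σ' ∧ 0 ≤ g ∧
      ∀ x : X, ∀ u ∈ sys.inputs, ∀ t ≥ (0 : ℝ),
        ‖sys.trans t x u‖ ≤ M' * Real.exp (-σ' * t) * ‖x‖ + g * runSup u t) := by
  refine ⟨fun T hT x u hu t ht => sys.norm_trans_le_issGain hES hrob hT x hu ht, ?_⟩
  obtain ⟨T, hT0, hT⟩ : ∃ T : ℝ, 0 < T ∧ 1 / σ * log M < T :=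
    ⟨max 0 (1 / σ * log M) + 1, by positivity, by linarith [le_max_right 0 (1 / σ * log M)]⟩
  have hrate : T⁻¹ * log M < σ :=
    (inv_mul_lt_iff₀ hT0).2 (by linarith [log_lt_mul_of_one_div_mul_lt hES.2.1 hT])
  refine ⟨M, σ - T⁻¹ * log M, issGain M σ b T, hES.1, by linarith,
    issGain_nonneg (mul_exp_neg_lt_one hES.1 hES.2.1 hT) hES.1.le hrob.2.1,
    fun x u hu t ht => sys.norm_trans_le_issGain hES hrob hT x hu ht⟩
end
end

section
/- Let Σ = (X, Y, M(U), φ, h) be a linear control system with h(x) = x (so Y = X) that is exponentially stable and robust with respect to the input with nondecreasing function b. Let S(t)x := φ(t,x,0), M(σ) := sup_{t≥0}( ‖S(t)‖_{L(X)}·e^{σt} ) and F_S := { σ > 0 : M(σ) < +∞ }. Then the minimum ISS-gain γ satisfies γ ≤ min( inf{ sup_{0≤s<T}( M(σ)·e^{−σs}·b(T)/(1 − M(σ)·e^{−σT}) + b(s) ) : σ ∈ F_S, T > (1/σ)·ln(M(σ)) }, sup_{s≥0} b(s) ). -/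
open Filter

noncomputable section

namespace LinearControlSystem

variable {X Y U : Type*}
    [NormedAddCommGroup X] [NormedSpace ℝ X]
    [NormedAddCommGroup Y] [NormedSpace ℝ Y]
    [NormedAddCommGroup U] [NormedSpace ℝ U]

lemma decomp (sys : LinearControlSystem X X U) {u : ℝ → U} (hu : u ∈ sys.inputs)
    {τ t : ℝ} (hτ : 0 < τ) (hτt : τ ≤ t) :
    sys.trans t 0 u
      = sys.trans (t - τ) (sys.trans τ 0 u) 0
        + sys.trans (t - τ) 0 (fun s => u (s + τ)) := by
  have hshift := sys.shift_mem u hu τ hτ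
  have h1 := sys.semigroup 0 u hu τ t hτ.le hτt
  have h2 := sys.linearity (t - τ) (by linarith) (sys.trans τ 0 u) 0
      0 sys.zero_mem (fun s => u (s + τ)) hshift 1 1
  have hfun : ((1:ℝ) • (0 : ℝ → U) + (1:ℝ) • (fun s => u (s + τ)))
      = (fun s => u (s + τ)) := by funext s; simp
  rw [hfun] at h2
  simp only [one_smul, smul_zero, add_zero, zero_add] at h2
  rw [h1, h2]

lemma runSup_le_one (sys : LinearControlSystem X X U) {u : ℝ → U} (hu : u ∈ sys.inputs)
    {t : ℝ} (hrun : LinearControlSystem.runSup u t = 1)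
    {r : ℝ} (hr0 : 0 ≤ r) (hrt : r ≤ t) : ‖u r‖ ≤ 1 := by
  have := le_csSup (sys.loc_bdd u hu t) (Set.mem_image_of_mem _ ⟨hr0, hrt⟩)
  rwa [show sSup ((fun s => ‖u s‖) '' Set.Icc 0 t) = LinearControlSystem.runSup u t from rfl,
    hrun] at this

/-- Main estimate: `‖φ(t,0,u)‖ ≤ sup_{0≤s<T}( Mσ e^{−σs} b(T)/(1−Mσ e^{−σT}) + b(s) )`. -/
lemma main_bound (sys : LinearControlSystem X X U) {b : ℝ → ℝ} (hrob : sys.IsRobust b)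
    {σ Mσ T : ℝ} (hσ : 0 < σ) (hMσ : 0 ≤ Mσ)
    (hSb : ∀ s, 0 ≤ s → ∀ x : X, ‖sys.trans s x 0‖ ≤ Mσ * Real.exp (-σ * s) * ‖x‖)
    (hT : 0 < T) (hq : Mσ * Real.exp (-σ * T) < 1)
    {u : ℝ → U} (hu : u ∈ sys.inputs) {t : ℝ} (ht : 0 ≤ t)
    (hrun : LinearControlSystem.runSup u t = 1) :
    ‖sys.trans t 0 u‖ ≤ sSup ((fun s => Mσ * Real.exp (-σ * s) * b T /
        (1 - Mσ * Real.exp (-σ * T)) + b s) '' Set.Ico 0 T) := by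
  obtain ⟨hbmono, hbpos, hbbound⟩ := hrob
  set q : ℝ := Mσ * Real.exp (-σ * T) with hqdef
  have hq0 : 0 ≤ q := mul_nonneg hMσ (Real.exp_pos _).le
  have hq1 : 0 < 1 - q := by linarith
  -- running sup facts
  have hrun_le : ∀ s, 0 ≤ s → s ≤ t → LinearControlSystem.runSup u s ≤ 1 := by
    intro s hs0 hst
    refine Real.sSup_le ?_ zero_le_one
    rintro r ⟨r', ⟨h0, h1'⟩, rfl⟩
    exact runSup_le_one sys hu hrun h0 (h1'.trans hst)
  have hshift_run : ∀ τ s, 0 < τ → 0 ≤ s → τ + s ≤ t →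
      LinearControlSystem.runSup (fun r => u (r + τ)) s ≤ 1 := by
    intro τ s hτ hs0 hts
    refine Real.sSup_le ?_ zero_le_one
    rintro r ⟨r', ⟨h0, h1'⟩, rfl⟩
    exact runSup_le_one sys hu hrun (by linarith) (by linarith)
  -- iterative bound at multiples of T
  have abound : ∀ k : ℕ, (k : ℝ) * T ≤ t →
      ‖sys.trans ((k : ℝ) * T) 0 u‖ ≤ b T / (1 - q) := by
    intro k
    induction k with
    | zero =>
      intro _
      simp only [Nat.cast_zero, zero_mul]
      rw [sys.identity 0 u hu]
      simp only [norm_zero]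
      exact div_nonneg (hbpos T) hq1.le
    | succ k ih =>
      intro hk1
      have hkk : (k : ℝ) * T ≤ ((k : ℝ) + 1) * T := by nlinarith
      have hkt : (k : ℝ) * T ≤ t := le_trans hkk (by push_cast at hk1 ⊢; linarith)
      have hbT_le : b T ≤ b T / (1 - q) := by
        rw [le_div_iff₀ hq1]
        nlinarith [hbpos T]
      rcases Nat.eq_zero_or_pos k with hk0 | hkpos
      · subst hk0
        simp only [Nat.cast_zero, Nat.cast_one, zero_add, one_mul]
        calc ‖sys.trans T 0 u‖ ≤ b T * LinearControlSystem.runSup u T :=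
              hbbound u hu T hT.le
          _ ≤ b T * 1 := by
              have := hrun_le T hT.le (by push_cast at hk1; linarith)
              nlinarith [hbpos T]
          _ = b T := mul_one _
          _ ≤ b T / (1 - q) := hbT_le
      · have hτpos : (0:ℝ) < (k : ℝ) * T := by
          have : (1:ℝ) ≤ (k:ℝ) := by exact_mod_cast hkpos
          nlinarith
        have hdec := decomp sys hu hτpos (le_trans hkk (by push_cast at hk1 ⊢; linarith))
          (τ := (k:ℝ) * T) (t := ((k:ℕ) + 1 : ℕ) * T)
        have hsub : (((k:ℕ) + 1 : ℕ) : ℝ) * T - (k:ℝ) * T = T := by push_cast; ring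
        rw [hsub] at hdec
        rw [hdec]
        have h1 : ‖sys.trans T (sys.trans ((k:ℝ)*T) 0 u) 0‖
            ≤ q * ‖sys.trans ((k:ℝ)*T) 0 u‖ := hSb T hT.le _
        have h2 : ‖sys.trans T 0 (fun s => u (s + (k:ℝ)*T))‖ ≤ b T := by
          calc ‖sys.trans T 0 (fun s => u (s + (k:ℝ)*T))‖
              ≤ b T * LinearControlSystem.runSup (fun s => u (s + (k:ℝ)*T)) T :=
                hbbound _ (sys.shift_mem u hu _ hτpos) T hT.le
            _ ≤ b T * 1 := by
                have := hshift_run ((k:ℝ)*T) T hτpos hT.le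
                  (by push_cast at hk1 ⊢; linarith)
                nlinarith [hbpos T]
            _ = b T := mul_one _
        have hak := ih hkt
        calc ‖sys.trans T (sys.trans ((k:ℝ)*T) 0 u) 0
              + sys.trans T 0 (fun s => u (s + (k:ℝ)*T))‖
            ≤ ‖sys.trans T (sys.trans ((k:ℝ)*T) 0 u) 0‖
              + ‖sys.trans T 0 (fun s => u (s + (k:ℝ)*T))‖ := norm_add_le _ _
          _ ≤ q * (b T / (1 - q)) + b T := by
              have := mul_le_mul_of_nonneg_left hak hq0
              linarith
          _ = b T / (1 - q) := by field_simp; ring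
  -- decompose t = kT + s with 0 ≤ s < T
  have hfl : (0:ℤ) ≤ ⌊t / T⌋ := Int.floor_nonneg.2 (div_nonneg ht hT.le)
  set k : ℕ := ⌊t / T⌋.toNat with hkdef
  have hkcast : ((k:ℤ):ℝ) = ((⌊t / T⌋ : ℤ) : ℝ) := by
    exact_mod_cast congrArg (fun z : ℤ => (z : ℝ)) (Int.toNat_of_nonneg hfl)
  set s : ℝ := t - (k:ℝ) * T with hsdef
  have hs0 : 0 ≤ s := by
    have := Int.sub_floor_div_mul_nonneg t hT
    rw [hsdef]
    have : t - ((⌊t / T⌋ : ℤ) : ℝ) * T = t - (k:ℝ)*T := by rw [← hkcast]; norm_cast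
    linarith [Int.sub_floor_div_mul_nonneg t hT, this ▸ Int.sub_floor_div_mul_nonneg t hT]
  have hsT : s < T := by
    have h := Int.sub_floor_div_mul_lt t hT
    have he : t - ((⌊t / T⌋ : ℤ) : ℝ) * T = s := by
      rw [hsdef, ← hkcast]; norm_cast
    linarith [he ▸ h]
  have hkT_le : (k:ℝ) * T ≤ t := by rw [hsdef] at hs0; linarith
  have hmem : (Mσ * Real.exp (-σ * s) * b T / (1 - q) + b s)
      ∈ ((fun s => Mσ * Real.exp (-σ * s) * b T / (1 - q) + b s) '' Set.Ico 0 T) :=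
    Set.mem_image_of_mem _ ⟨hs0, hsT⟩
  have hbdd : BddAbove ((fun s => Mσ * Real.exp (-σ * s) * b T / (1 - q) + b s)
      '' Set.Ico 0 T) := by
    refine ⟨Mσ * b T / (1 - q) + b T, ?_⟩
    rintro r ⟨x, ⟨hx0, hxT⟩, rfl⟩
    have hexp : Real.exp (-σ * x) ≤ 1 := by
      rw [Real.exp_le_one_iff]; nlinarith
    have h1 : Mσ * Real.exp (-σ * x) * b T ≤ Mσ * b T := by
      have := mul_nonneg (mul_nonneg hMσ (hbpos T))
        (by linarith : (0:ℝ) ≤ 1 - Real.exp (-σ * x))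
      nlinarith
    have h2 : b x ≤ b T := hbmono (Set.mem_Ici.2 hx0) (Set.mem_Ici.2 hT.le) hxT.le
    have h3 : Mσ * Real.exp (-σ * x) * b T / (1 - q) ≤ Mσ * b T / (1 - q) :=
      div_le_div_of_nonneg_right h1 hq1.le
    linarith
  refine le_trans ?_ (le_csSup hbdd hmem)
  -- bound ‖trans t 0 u‖ by the element at s
  have hterm0 : 0 ≤ Mσ * Real.exp (-σ * s) * b T / (1 - q) :=
    div_nonneg (mul_nonneg (mul_nonneg hMσ (Real.exp_pos _).le) (hbpos T)) hq1.le
  rcases Nat.eq_zero_or_pos k with hk0 | hkpos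
  · have hts : t = s := by rw [hsdef, hk0]; push_cast; ring
    calc ‖sys.trans t 0 u‖ ≤ b t * LinearControlSystem.runSup u t := hbbound u hu t ht
      _ = b t := by rw [hrun, mul_one]
      _ = b s := by rw [hts]
      _ ≤ Mσ * Real.exp (-σ * s) * b T / (1 - q) + b s := by linarith
  · have hτpos : (0:ℝ) < (k:ℝ) * T := by
      have : (1:ℝ) ≤ (k:ℝ) := by exact_mod_cast hkpos
      nlinarith
    have hdec := decomp sys hu hτpos hkT_le (τ := (k:ℝ) * T) (t := t)
    have hsub : t - (k:ℝ) * T = s := by rw [hsdef]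
    rw [hsub] at hdec
    rw [hdec]
    have h1 : ‖sys.trans s (sys.trans ((k:ℝ)*T) 0 u) 0‖
        ≤ Mσ * Real.exp (-σ * s) * ‖sys.trans ((k:ℝ)*T) 0 u‖ := hSb s hs0 _
    have hak := abound k hkT_le
    have h2 : ‖sys.trans s 0 (fun r => u (r + (k:ℝ)*T))‖ ≤ b s := by
      calc ‖sys.trans s 0 (fun r => u (r + (k:ℝ)*T))‖
          ≤ b s * LinearControlSystem.runSup (fun r => u (r + (k:ℝ)*T)) s :=
            hbbound _ (sys.shift_mem u hu _ hτpos) s hs0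
        _ ≤ b s * 1 := by
            have := hshift_run ((k:ℝ)*T) s hτpos hs0 (by linarith [hsub])
            nlinarith [hbpos s]
        _ = b s := mul_one _
    calc ‖sys.trans s (sys.trans ((k:ℝ)*T) 0 u) 0
          + sys.trans s 0 (fun r => u (r + (k:ℝ)*T))‖
        ≤ ‖sys.trans s (sys.trans ((k:ℝ)*T) 0 u) 0‖
          + ‖sys.trans s 0 (fun r => u (r + (k:ℝ)*T))‖ := norm_add_le _ _
      _ ≤ Mσ * Real.exp (-σ * s) * (b T / (1 - q)) + b s := by
          have hmul := mul_le_mul_of_nonneg_left hak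
            (mul_nonneg hMσ (Real.exp_pos (-σ * s)).le)
          linarith
      _ = Mσ * Real.exp (-σ * s) * b T / (1 - q) + b s := by rw [mul_div_assoc]

end LinearControlSystem

open LinearControlSystem in
/-- Theorem 4.1, formula (4.1): for an ES, robust linear control system with output the
identity map, the minimum ISS-gain `γ` satisfies
`γ ≤ min( inf{ sup_{0≤s<T}( M(σ)e^{−σs}b(T)/(1−M(σ)e^{−σT}) + b(s) ) :
              σ ∈ F_S, T > (1/σ)ln M(σ) }, sup_{s≥0} b(s) )`,
where `S(t)x = φ(t,x,0)`, `M(σ) = sup_{t≥0} ‖S(t)‖e^{σt}` and `F_S = {σ > 0 : M(σ) < ∞}`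
(`σ ∈ F_S` and `M(σ)` are encoded by `IsLUB`); the min is taken in `EReal` since the
right-hand side may be `+∞`. -/
theorem statement_1 {X U : Type*}
    [NormedAddCommGroup X] [NormedSpace ℝ X]
    [NormedAddCommGroup U] [NormedSpace ℝ U]
    (sys : LinearControlSystem X X U) (hout : ∀ x : X, sys.out x = x)
    (hES : sys.ES) (b : ℝ → ℝ) (hrob : sys.IsRobust b)
    (S : ℝ → X →L[ℝ] X) (hS : ∀ t ≥ (0 : ℝ), ∀ x : X, S t x = sys.trans t x 0) :
    (↑(sSup {r | ∃ t ≥ (0 : ℝ), ∃ u ∈ sys.inputs,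
        runSup u t = 1 ∧ r = ‖sys.trans t 0 u‖}) : EReal) ≤
      min
        (sInf {c : EReal | ∃ σ > (0 : ℝ), ∃ Mσ : ℝ,
          IsLUB {r : ℝ | ∃ t ≥ (0 : ℝ), r = ‖S t‖ * Real.exp (σ * t)} Mσ ∧
          ∃ T > (1 / σ) * Real.log Mσ,
            c = (↑(sSup ((fun s => Mσ * Real.exp (-σ * s) * b T /
                (1 - Mσ * Real.exp (-σ * T)) + b s) '' Set.Ico 0 T)) : EReal)})
        (⨆ s : Set.Ici (0 : ℝ), (↑(b s.1) : EReal)) := by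
  obtain ⟨hbmono, hbpos, hbbound⟩ := hrob
  refine le_min ?_ ?_
  · -- bound by the infimum
    refine le_sInf ?_
    rintro c ⟨σ, hσ, Mσ, hLUB, T, hT, rfl⟩
    -- basic facts about Mσ
    have hS0mem : ‖S 0‖ * Real.exp (σ * 0) ∈
        {r : ℝ | ∃ t ≥ (0 : ℝ), r = ‖S t‖ * Real.exp (σ * t)} := ⟨0, le_rfl, rfl⟩
    have hS0 : ‖S 0‖ ≤ Mσ := by
      have := hLUB.1 hS0mem
      simpa using this
    have hMσ0 : 0 ≤ Mσ := le_trans (norm_nonneg _) hS0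
    have hSb : ∀ s, 0 ≤ s → ∀ x : X, ‖sys.trans s x 0‖ ≤ Mσ * Real.exp (-σ * s) * ‖x‖ := by
      intro s hs x
      have hub : ‖S s‖ * Real.exp (σ * s) ≤ Mσ := hLUB.1 ⟨s, hs, rfl⟩
      have hnorm : ‖S s‖ ≤ Mσ * Real.exp (-σ * s) := by
        have hexp : (0:ℝ) < Real.exp (σ * s) := Real.exp_pos _
        have h' : ‖S s‖ ≤ Mσ / Real.exp (σ * s) := (le_div_iff₀ hexp).2 hub
        rwa [div_eq_mul_inv, ← Real.exp_neg, show -(σ * s) = -σ * s by ring] at h'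
      calc ‖sys.trans s x 0‖ = ‖S s x‖ := by rw [hS s hs x]
        _ ≤ ‖S s‖ * ‖x‖ := (S s).le_opNorm x
        _ ≤ Mσ * Real.exp (-σ * s) * ‖x‖ :=
            mul_le_mul_of_nonneg_right hnorm (norm_nonneg x)
    -- dichotomy: Mσ = 0 (subsingleton) or Mσ ≥ 1
    have hdich : Mσ = 0 ∨ 1 ≤ Mσ := by
      rcases subsingleton_or_nontrivial X with hsub | hnt
      · left
        have hub : (0:ℝ) ∈ upperBounds
            {r : ℝ | ∃ t ≥ (0 : ℝ), r = ‖S t‖ * Real.exp (σ * t)} := by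
          rintro r ⟨t, ht, rfl⟩
          have : S t = 0 := Subsingleton.elim _ _
          rw [this, norm_zero, zero_mul]
        have h1 := hLUB.2 hub
        have h2 : 0 ≤ Mσ := hMσ0
        linarith
      · right
        have hid : S 0 = ContinuousLinearMap.id ℝ X := by
          ext x
          rw [hS 0 le_rfl x, sys.identity x 0 sys.zero_mem]
          rfl
        have : ‖S 0‖ = 1 := by rw [hid]; exact ContinuousLinearMap.norm_id
        linarith [hS0]
    have hT0 : 0 < T := by
      rcases hdich with h0 | h1
      · rw [h0, Real.log_zero, mul_zero] at hT; exact hT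
      · have hlog : 0 ≤ Real.log Mσ := Real.log_nonneg h1
        have : 0 ≤ (1 / σ) * Real.log Mσ :=
          mul_nonneg (by positivity) hlog
        linarith
    have hq : Mσ * Real.exp (-σ * T) < 1 := by
      rcases hdich with h0 | h1
      · rw [h0, zero_mul]; norm_num
      · have hMσpos : (0:ℝ) < Mσ := lt_of_lt_of_le one_pos h1
        have hlt : Real.log Mσ < σ * T := by
          have : (1 / σ) * Real.log Mσ < T := hT
          have hσ' : (0:ℝ) < σ := hσ
          calc Real.log Mσ = σ * ((1 / σ) * Real.log Mσ) := by field_simp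
            _ < σ * T := by exact mul_lt_mul_of_pos_left this hσ'
        have : Mσ < Real.exp (σ * T) := by
          calc Mσ = Real.exp (Real.log Mσ) := (Real.exp_log hMσpos).symm
            _ < Real.exp (σ * T) := Real.exp_lt_exp.2 hlt
        have hexp : (0:ℝ) < Real.exp (-σ * T) := Real.exp_pos _
        have h2 : Mσ * Real.exp (-σ * T) < Real.exp (σ * T) * Real.exp (-σ * T) :=
          mul_lt_mul_of_pos_right this hexp
        rwa [← Real.exp_add, show σ * T + -σ * T = 0 by ring, Real.exp_zero] at h2
    -- the supremum is nonnegative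
    set K := sSup ((fun s => Mσ * Real.exp (-σ * s) * b T /
        (1 - Mσ * Real.exp (-σ * T)) + b s) '' Set.Ico 0 T) with hKdef
    have hq1 : 0 < 1 - Mσ * Real.exp (-σ * T) := by linarith
    have hbddK : BddAbove ((fun s => Mσ * Real.exp (-σ * s) * b T /
        (1 - Mσ * Real.exp (-σ * T)) + b s) '' Set.Ico 0 T) := by
      refine ⟨Mσ * b T / (1 - Mσ * Real.exp (-σ * T)) + b T, ?_⟩
      rintro r ⟨x, ⟨hx0, hxT⟩, rfl⟩
      have hexp : Real.exp (-σ * x) ≤ 1 := by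
        rw [Real.exp_le_one_iff]; nlinarith
      have h1 : Mσ * Real.exp (-σ * x) * b T ≤ Mσ * b T := by
        have := mul_nonneg (mul_nonneg hMσ0 (hbpos T))
          (by linarith : (0:ℝ) ≤ 1 - Real.exp (-σ * x))
        nlinarith
      have h2 : b x ≤ b T := hbmono (Set.mem_Ici.2 hx0) (Set.mem_Ici.2 hT0.le) hxT.le
      have h3 := div_le_div_of_nonneg_right h1 hq1.le
      linarith
    have hK0 : 0 ≤ K := by
      have hmem0 : (Mσ * Real.exp (-σ * 0) * b T /
          (1 - Mσ * Real.exp (-σ * T)) + b 0) ∈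
          ((fun s => Mσ * Real.exp (-σ * s) * b T /
            (1 - Mσ * Real.exp (-σ * T)) + b s) '' Set.Ico 0 T) :=
        Set.mem_image_of_mem _ ⟨le_rfl, hT0⟩
      have hval0 : 0 ≤ Mσ * Real.exp (-σ * 0) * b T /
          (1 - Mσ * Real.exp (-σ * T)) + b 0 := by
        have := div_nonneg (mul_nonneg (mul_nonneg hMσ0 (Real.exp_pos (-σ * 0)).le)
          (hbpos T)) hq1.le
        linarith [hbpos 0]
      exact le_trans hval0 (le_csSup hbddK hmem0)
    rw [EReal.coe_le_coe_iff]
    refine Real.sSup_le ?_ hK0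
    rintro r ⟨t, ht, u, hu, hrun, rfl⟩
    exact main_bound sys ⟨hbmono, hbpos, hbbound⟩ hσ hMσ0 hSb hT0 hq hu ht hrun
  · -- bound by sup_{s ≥ 0} b(s)
    set J := ⨆ s : Set.Ici (0 : ℝ), (↑(b s.1) : EReal) with hJ
    by_cases htop : J = ⊤
    · rw [htop]; exact le_top
    · have hb0J : ((b 0 : ℝ) : EReal) ≤ J :=
        le_iSup (fun s : Set.Ici (0:ℝ) => ((b s.1 : ℝ) : EReal)) ⟨0, Set.self_mem_Ici⟩
      have hbot : J ≠ ⊥ := by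
        intro h
        rw [h, le_bot_iff] at hb0J
        exact EReal.coe_ne_bot _ hb0J
      have hJeq : ((J.toReal : ℝ) : EReal) = J := EReal.coe_toReal htop hbot
      set c : ℝ := J.toReal with hc
      have hbc : ∀ s, 0 ≤ s → b s ≤ c := by
        intro s hs
        have : ((b s : ℝ) : EReal) ≤ J :=
          le_iSup (fun s : Set.Ici (0:ℝ) => ((b s.1 : ℝ) : EReal)) ⟨s, Set.mem_Ici.2 hs⟩
        rw [← hJeq] at this
        exact_mod_cast this
      have hc0 : 0 ≤ c := le_trans (hbpos 0) (hbc 0 le_rfl)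
      rw [← hJeq, EReal.coe_le_coe_iff]
      refine Real.sSup_le ?_ hc0
      rintro r ⟨t, ht, u, hu, hrun, rfl⟩
      calc ‖sys.trans t 0 u‖ ≤ b t * runSup u t := hbbound u hu t ht
        _ = b t := by rw [hrun, mul_one]
        _ ≤ c := hbc t ht
end
end

section
/- Let Σ = (X, Y, M(U), φ, h) be a linear control system that is exponentially stable with constants M, σ > 0 and robust with respect to the input with nondecreasing function b. Fix T > (1/σ)·ln(M) and set λ := M·e^{−σT} < 1. Then for every integer k ≥ 0, every x ∈ X and every u ∈ M(U), ‖φ(kT, x, u)‖_X ≤ λ^k·‖x‖_X + (b(T)/(1−λ))·sup_{0≤s≤kT}‖u(s)‖_U. -/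
open Filter

noncomputable section

open LinearControlSystem in
/-- Estimate (4.14): for an ES, robust linear control system, with `λ := M·e^{-σT} < 1`
(for `T > (1/σ)·ln M`) one has
`‖φ(kT,x,u)‖ ≤ λ^k·‖x‖ + (b(T)/(1-λ))·sup_{0≤s≤kT}‖u(s)‖` for every integer `k ≥ 0`. -/
theorem statement_2 {X Y U : Type*}
    [NormedAddCommGroup X] [NormedSpace ℝ X]
    [NormedAddCommGroup Y] [NormedSpace ℝ Y]
    [NormedAddCommGroup U] [NormedSpace ℝ U]
    (sys : LinearControlSystem X Y U) (M σ : ℝ) (b : ℝ → ℝ)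
    (hES : sys.IsES M σ) (hrob : sys.IsRobust b)
    (T : ℝ) (hT : T > (1 / σ) * Real.log M) :
    M * Real.exp (-σ * T) < 1 ∧
    ∀ k : ℕ, ∀ x : X, ∀ u ∈ sys.inputs,
      ‖sys.trans (k * T) x u‖ ≤ (M * Real.exp (-σ * T)) ^ k * ‖x‖ +
        b T / (1 - M * Real.exp (-σ * T)) * runSup u (k * T) := by
  obtain ⟨hM, hσ, hstab⟩ := hES
  obtain ⟨hbmono, hbnn, hbrob⟩ := hrob
  set lam := M * Real.exp (-σ * T) with hlam
  have hlam_pos : 0 < lam := mul_pos hM (Real.exp_pos _)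
  have hlogT : Real.log M < σ * T := by
    have h2 := mul_lt_mul_of_pos_left hT hσ
    have h3 : σ * (1 / σ * Real.log M) = Real.log M := by field_simp
    rw [h3] at h2
    exact h2
  have hlam1 : lam < 1 := by
    rw [hlam, ← Real.exp_log hM, ← Real.exp_add]
    rw [← Real.exp_zero]
    exact Real.exp_lt_exp.mpr (by linarith)
  refine ⟨hlam1, ?_⟩
  have hrs_nonneg : ∀ (u : ℝ → U) (t : ℝ), 0 ≤ runSup u t := by
    intro u t
    apply Real.sSup_nonneg
    rintro r ⟨s, -, rfl⟩
    exact norm_nonneg _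
  have hCnn : 0 ≤ b T / (1 - lam) := div_nonneg (hbnn T) (by linarith)
  rcases subsingleton_or_nontrivial X with hX | hX
  · intro k x u hu
    have hz : sys.trans (k * T) x u = 0 := Subsingleton.elim _ _
    rw [hz, norm_zero]
    have h1 : (0:ℝ) ≤ lam ^ k * ‖x‖ := by positivity
    have h2 : 0 ≤ b T / (1 - lam) * runSup u (k * T) :=
      mul_nonneg hCnn (hrs_nonneg _ _)
    linarith
  · obtain ⟨x₀, hx₀⟩ := exists_ne (0 : X)
    have hM1 : 1 ≤ M := by
      have h := hstab x₀ 0 le_rfl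
      rw [sys.identity x₀ 0 sys.zero_mem] at h
      simp only [mul_zero, Real.exp_zero, mul_one] at h
      have hx₀' : 0 < ‖x₀‖ := norm_pos_iff.mpr hx₀
      nlinarith
    have hT0 : 0 < T := by
      have hlog : 0 ≤ Real.log M := Real.log_nonneg hM1
      nlinarith
    intro k x u hu
    induction k with
    | zero =>
      simp only [Nat.cast_zero, zero_mul, pow_zero, one_mul]
      rw [sys.identity x u hu]
      have h2 : 0 ≤ b T / (1 - lam) * runSup u 0 := mul_nonneg hCnn (hrs_nonneg _ _)
      linarith
    | succ k ih =>
      have hkT : (0:ℝ) ≤ k * T := by positivity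
      have hcast : ((k + 1 : ℕ) : ℝ) = (k : ℝ) + 1 := by push_cast; ring
      rw [hcast]
      have hvmem : (fun s => u (s + (k : ℝ) * T)) ∈ sys.inputs := by
        rcases eq_or_lt_of_le hkT with h | h
        · have : (fun s => u (s + (k : ℝ) * T)) = u := by
            funext s; rw [← h, add_zero]
          rw [this]; exact hu
        · exact sys.shift_mem u hu _ h
      have hsg := sys.semigroup x u hu ((k : ℝ) * T) (((k : ℝ) + 1) * T) hkT (by nlinarith)
      have hsub : ((k : ℝ) + 1) * T - (k : ℝ) * T = T := by ring
      rw [hsub] at hsg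
      set z := sys.trans ((k : ℝ) * T) x u with hz
      have hlin := sys.linearity T hT0.le z 0 0 sys.zero_mem _ hvmem 1 1
      simp only [one_smul, add_zero, zero_add, smul_zero] at hlin
      rw [hsg, hlin]
      have hb1 : ‖sys.trans T z 0‖ ≤ lam * ‖z‖ := hstab z T hT0.le
      have hb2 : ‖sys.trans T 0 (fun s => u (s + (k : ℝ) * T))‖ ≤
          b T * runSup (fun s => u (s + (k : ℝ) * T)) T := hbrob _ hvmem T hT0.le
      have hbdd : BddAbove ((fun s => ‖u s‖) '' Set.Icc 0 (((k : ℝ) + 1) * T)) :=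
        sys.loc_bdd u hu _
      have hsup1 : runSup (fun s => u (s + (k : ℝ) * T)) T ≤ runSup u (((k : ℝ) + 1) * T) := by
        apply Real.sSup_le _ (hrs_nonneg _ _)
        rintro r ⟨s, ⟨hs0, hsT⟩, rfl⟩
        exact le_csSup hbdd ⟨s + (k : ℝ) * T, ⟨by linarith, by linarith⟩, rfl⟩
      have hsup2 : runSup u ((k : ℝ) * T) ≤ runSup u (((k : ℝ) + 1) * T) := by
        apply Real.sSup_le _ (hrs_nonneg _ _)
        rintro r ⟨s, ⟨hs0, hsk⟩, rfl⟩
        exact le_csSup hbdd ⟨s, ⟨hs0, by linarith⟩, rfl⟩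
      have hC : lam * (b T / (1 - lam)) + b T = b T / (1 - lam) := by
        have h1 : (1 : ℝ) - lam ≠ 0 := by linarith
        field_simp
        ring
      have e0 : ‖sys.trans T z 0 + sys.trans T 0 (fun s => u (s + (k : ℝ) * T))‖ ≤
          ‖sys.trans T z 0‖ + ‖sys.trans T 0 (fun s => u (s + (k : ℝ) * T))‖ := norm_add_le _ _
      have e1 : lam * ‖z‖ ≤ lam * (lam ^ k * ‖x‖ + b T / (1 - lam) * runSup u ((k : ℝ) * T)) :=
        mul_le_mul_of_nonneg_left ih hlam_pos.le
      have e2 : b T * runSup (fun s => u (s + (k : ℝ) * T)) T ≤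
          b T * runSup u (((k : ℝ) + 1) * T) := mul_le_mul_of_nonneg_left hsup1 (hbnn T)
      have e3 : lam * (b T / (1 - lam) * runSup u ((k : ℝ) * T)) ≤
          lam * (b T / (1 - lam) * runSup u (((k : ℝ) + 1) * T)) := by
        apply mul_le_mul_of_nonneg_left _ hlam_pos.le
        exact mul_le_mul_of_nonneg_left hsup2 hCnn
      have hpow : lam ^ (k + 1) = lam * lam ^ k := by rw [pow_succ]; ring
      have hCR : lam * (b T / (1 - lam) * runSup u (((k : ℝ) + 1) * T)) +
          b T * runSup u (((k : ℝ) + 1) * T) =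
          b T / (1 - lam) * runSup u (((k : ℝ) + 1) * T) := by
        calc lam * (b T / (1 - lam) * runSup u (((k : ℝ) + 1) * T)) +
            b T * runSup u (((k : ℝ) + 1) * T)
            = (lam * (b T / (1 - lam)) + b T) * runSup u (((k : ℝ) + 1) * T) := by ring
          _ = b T / (1 - lam) * runSup u (((k : ℝ) + 1) * T) := by rw [hC]
      have hpow' : lam ^ (k + 1) * ‖x‖ = lam * (lam ^ k * ‖x‖) := by
        rw [pow_succ]; ring
      linarith [e0, e1, e2, e3, hb1, hb2, hCR, hpow']
end
end

section
/- Let Σ = (X, Y, M(U), φ, h) be a linear control system which is exponentially input-to-output stable with U ≠ {0}. Then the minimum IOS-gain satisfies γ = sup{ sup_{t≥0} ‖h(φ(t,0,u))‖_Y : u ∈ M(U), sup_{s≥0}‖u(s)‖_U = 1 }; that is, the supremum defining γ over finite time horizons with inputs normalized on [0,t] equals the supremum over globally bounded inputs of norm one of the supremum over all times of the output norm. -/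
open Filter

noncomputable section

open LinearControlSystem in
/-- Remark 2.4(iv), equation (2.14): for an exp-IOS linear control system the minimum
IOS-gain equals the supremum, over globally bounded inputs of norm one, of the supremum
over all times of the output norm. -/
theorem statement_3 {X Y U : Type*}
    [NormedAddCommGroup X] [NormedSpace ℝ X]
    [NormedAddCommGroup Y] [NormedSpace ℝ Y]
    [NormedAddCommGroup U] [NormedSpace ℝ U]
    (sys : LinearControlSystem X Y U)
    (hIOS : ∃ M σ g : ℝ, 0 < M ∧ 0 < σ ∧ 0 ≤ g ∧
      ∀ x : X, ∀ u ∈ sys.inputs, ∀ t ≥ (0 : ℝ),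
        ‖sys.out (sys.trans t x u)‖ ≤ M * Real.exp (-σ * t) * ‖x‖ + g * runSup u t) :
    sys.gain = sSup {r | ∃ u ∈ sys.inputs, supNorm u = 1 ∧
      r = sSup ((fun t => ‖sys.out (sys.trans t 0 u)‖) '' Set.Ici 0)} := by
  obtain ⟨M, σ, g, hM, hσ, hg, hbound⟩ := hIOS
  set S : Set ℝ := {r | ∃ t ≥ (0 : ℝ), ∃ u ∈ sys.inputs,
      runSup u t = 1 ∧ r = ‖sys.out (sys.trans t 0 u)‖} with hSdef
  set T : Set ℝ := {r | ∃ u ∈ sys.inputs, supNorm u = 1 ∧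
      r = sSup ((fun t => ‖sys.out (sys.trans t 0 u)‖) '' Set.Ici 0)} with hTdef
  show sSup S = sSup T
  -- basic facts
  have hzero : ∀ t ≥ (0 : ℝ), sys.trans t (0 : X) (0 : ℝ → U) = 0 := by
    intro t ht
    have := sys.linearity t ht 0 0 0 sys.zero_mem 0 sys.zero_mem 0 0
    simpa using this
  have hsmul : ∀ t ≥ (0 : ℝ), ∀ u ∈ sys.inputs, ∀ c : ℝ,
      sys.trans t (0 : X) (c • u) = c • sys.trans t 0 u := by
    intro t ht u hu c
    have := sys.linearity t ht 0 0 u hu 0 sys.zero_mem c 0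
    simpa using this
  have runSup_ub : ∀ u ∈ sys.inputs, ∀ s t : ℝ, 0 ≤ s → s ≤ t →
      ‖u s‖ ≤ runSup u t := by
    intro u hu s t hs hst
    exact le_csSup (sys.loc_bdd u hu t) ⟨s, ⟨hs, hst⟩, rfl⟩
  have runSup_nonneg : ∀ u ∈ sys.inputs, ∀ t ≥ (0 : ℝ), 0 ≤ runSup u t := by
    intro u hu t ht
    exact le_trans (norm_nonneg _) (runSup_ub u hu 0 t le_rfl ht)
  have hS_le_g : ∀ r ∈ S, r ≤ g := by
    rintro r ⟨t, ht, u, hu, hrun, rfl⟩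
    have := hbound 0 u hu t ht
    rw [hrun] at this
    simpa using this
  have hS_bdd : BddAbove S := ⟨g, hS_le_g⟩
  have hS_zero : (0 : ℝ) ∈ S := by
    obtain ⟨v₀, hv₀⟩ := sys.U_nontrivial
    obtain ⟨u, hu, hu0⟩ := sys.exists_input_val (‖v₀‖⁻¹ • v₀)
    refine ⟨0, le_rfl, u, hu, ?_, ?_⟩
    · have : runSup u 0 = ‖u 0‖ := by
        unfold LinearControlSystem.runSup
        rw [Set.Icc_self, Set.image_singleton, csSup_singleton]
      rw [this, hu0, norm_smul, norm_inv, norm_norm,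
        inv_mul_cancel₀ (norm_ne_zero_iff.mpr hv₀)]
    · rw [sys.identity 0 u hu, map_zero, norm_zero]
  have hγ_nonneg : (0 : ℝ) ≤ sSup S := le_csSup hS_bdd hS_zero
  -- boundedness facts for T
  have hsup_bdd : ∀ w ∈ sys.inputs, supNorm w = 1 →
      BddAbove ((fun s => ‖w s‖) '' Set.Ici 0) := by
    intro w hw hsw
    by_contra h
    unfold LinearControlSystem.supNorm at hsw
    rw [Real.sSup_of_not_bddAbove h] at hsw
    norm_num at hsw
  have hw_le1 : ∀ w ∈ sys.inputs, supNorm w = 1 → ∀ s ≥ (0 : ℝ), ‖w s‖ ≤ 1 := by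
    intro w hw hsw s hs
    calc ‖w s‖ ≤ supNorm w := le_csSup (hsup_bdd w hw hsw) ⟨s, hs, rfl⟩
    _ = 1 := hsw
  have hrun_le1 : ∀ w ∈ sys.inputs, supNorm w = 1 → ∀ s ≥ (0 : ℝ), runSup w s ≤ 1 := by
    intro w hw hsw s hs
    refine csSup_le ⟨‖w 0‖, 0, ⟨le_rfl, hs⟩, rfl⟩ ?_
    rintro r ⟨x, ⟨hx0, hxs⟩, rfl⟩
    exact hw_le1 w hw hsw x hx0
  have hout_le_g : ∀ w ∈ sys.inputs, supNorm w = 1 → ∀ s ≥ (0 : ℝ),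
      ‖sys.out (sys.trans s 0 w)‖ ≤ g := by
    intro w hw hsw s hs
    have h1 := hbound 0 w hw s hs
    have h2 : g * runSup w s ≤ g * 1 :=
      mul_le_mul_of_nonneg_left (hrun_le1 w hw hsw s hs) hg
    simp only [norm_zero, mul_zero, zero_add] at h1
    linarith
  have hT_le_g : ∀ r ∈ T, r ≤ g := by
    rintro r ⟨w, hw, hsw, rfl⟩
    refine csSup_le ⟨‖sys.out (sys.trans 0 0 w)‖, 0, Set.self_mem_Ici, rfl⟩ ?_
    rintro r ⟨s, hs, rfl⟩
    exact hout_le_g w hw hsw s hs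
  have hT_bdd : BddAbove T := ⟨g, hT_le_g⟩
  apply le_antisymm
  · -- sSup S ≤ sSup T
    refine csSup_le ⟨0, hS_zero⟩ ?_
    rintro r ⟨t, ht, u, hu, hrun, rfl⟩
    rcases eq_or_lt_of_le ht with ht0 | htpos
    · -- t = 0
      rw [← ht0, sys.identity 0 u hu, map_zero, norm_zero]
      refine Real.sSup_nonneg ?_
      rintro r ⟨w, hw, hsw, rfl⟩
      refine Real.sSup_nonneg ?_
      rintro r ⟨s, hs, rfl⟩
      exact norm_nonneg _
    · -- t > 0 : truncate the input after t
      set v : ℝ → U := fun s => if s ≤ t then u s else 0 with hvdef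
      have hv : v ∈ sys.inputs := by
        have := sys.concat_le_mem u hu 0 sys.zero_mem t htpos
        simpa using this
      have hv_le1 : ∀ s ≥ (0 : ℝ), ‖v s‖ ≤ 1 := by
        intro s hs
        by_cases hst : s ≤ t
        · simp only [hvdef, if_pos hst]
          rw [← hrun]
          exact runSup_ub u hu s t hs hst
        · simp [hvdef, if_neg hst]
      have hsupv : supNorm v = 1 := by
        apply le_antisymm
        · refine csSup_le ⟨‖v 0‖, 0, Set.self_mem_Ici, rfl⟩ ?_
          rintro r ⟨s, hs, rfl⟩
          exact hv_le1 s hs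
        · rw [← hrun]
          refine csSup_le_csSup ⟨1, ?_⟩ ⟨‖u 0‖, 0, ⟨le_rfl, ht⟩, rfl⟩ ?_
          · rintro r ⟨s, hs, rfl⟩
            exact hv_le1 s hs
          · rintro r ⟨s, ⟨hs0, hst⟩, rfl⟩
            exact ⟨s, hs0, by simp [hvdef, if_pos hst]⟩
      have hφ : sys.trans t 0 v = sys.trans t 0 u := by
        refine sys.causality t ht 0 v hv u hu ?_
        intro s hs0 hst
        simp [hvdef, if_pos hst]
      have hmemT : sSup ((fun s => ‖sys.out (sys.trans s 0 v)‖) '' Set.Ici 0) ∈ T :=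
        ⟨v, hv, hsupv, rfl⟩
      calc ‖sys.out (sys.trans t 0 u)‖
          = ‖sys.out (sys.trans t 0 v)‖ := by rw [hφ]
        _ ≤ sSup ((fun s => ‖sys.out (sys.trans s 0 v)‖) '' Set.Ici 0) := by
            refine le_csSup ⟨g, ?_⟩ ⟨t, ht, rfl⟩
            rintro r ⟨s, hs, rfl⟩
            exact hout_le_g v hv hsupv s hs
        _ ≤ sSup T := le_csSup hT_bdd hmemT
  · -- sSup T ≤ sSup S
    refine Real.sSup_le ?_ hγ_nonneg
    rintro r ⟨w, hw, hsw, rfl⟩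
    refine csSup_le ⟨‖sys.out (sys.trans 0 0 w)‖, 0, Set.self_mem_Ici, rfl⟩ ?_
    rintro r ⟨s, hs, rfl⟩
    show ‖sys.out (sys.trans s 0 w)‖ ≤ sSup S
    set c : ℝ := runSup w s with hcdef
    have hc0 : 0 ≤ c := runSup_nonneg w hw s hs
    have hc1 : c ≤ 1 := hrun_le1 w hw hsw s hs
    rcases eq_or_lt_of_le hc0 with hc | hc
    · -- runSup w s = 0 : w vanishes on [0,s]
      have hwz : ∀ x, 0 ≤ x → x ≤ s → w x = (0 : ℝ → U) x := by
        intro x hx0 hxs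
        have h1 : ‖w x‖ ≤ c := runSup_ub w hw x s hx0 hxs
        rw [← hc] at h1
        have : ‖w x‖ = 0 := le_antisymm h1 (norm_nonneg _)
        simpa using this
      have : sys.trans s 0 w = 0 := by
        rw [sys.causality s hs 0 w hw 0 sys.zero_mem hwz]
        exact hzero s hs
      rw [this, map_zero, norm_zero]
      exact hγ_nonneg
    · -- runSup w s = c > 0 : rescale
      set w' : ℝ → U := c⁻¹ • w with hw'def
      have hw' : w' ∈ sys.inputs := sys.smul_mem w hw c⁻¹
      have hnorm' : ∀ x : ℝ, ‖w' x‖ = c⁻¹ * ‖w x‖ := by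
        intro x
        show ‖c⁻¹ • w x‖ = c⁻¹ * ‖w x‖
        rw [norm_smul, Real.norm_eq_abs, abs_of_pos (inv_pos.mpr hc)]
      have hbdd' : BddAbove ((fun x => ‖w' x‖) '' Set.Icc 0 s) := sys.loc_bdd w' hw' s
      have hrun' : runSup w' s = 1 := by
        apply le_antisymm
        · refine csSup_le ⟨‖w' 0‖, 0, ⟨le_rfl, hs⟩, rfl⟩ ?_
          rintro r ⟨x, ⟨hx0, hxs⟩, rfl⟩
          show ‖w' x‖ ≤ 1
          rw [hnorm']
          calc c⁻¹ * ‖w x‖ ≤ c⁻¹ * c :=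
                mul_le_mul_of_nonneg_left (runSup_ub w hw x s hx0 hxs) (le_of_lt (inv_pos.mpr hc))
            _ = 1 := inv_mul_cancel₀ (ne_of_gt hc)
        · have : c ≤ c * runSup w' s := by
            rw [hcdef]
            refine csSup_le ⟨‖w 0‖, 0, ⟨le_rfl, hs⟩, rfl⟩ ?_
            rintro r ⟨x, ⟨hx0, hxs⟩, rfl⟩
            show ‖w x‖ ≤ c * runSup w' s
            have h1 : ‖w' x‖ ≤ runSup w' s := le_csSup hbdd' ⟨x, ⟨hx0, hxs⟩, rfl⟩
            have h2 : ‖w x‖ = c * ‖w' x‖ := by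
              rw [hnorm', ← mul_assoc, mul_inv_cancel₀ (ne_of_gt hc), one_mul]
            rw [h2]
            exact mul_le_mul_of_nonneg_left h1 hc0
          nlinarith
      have hws : w = c • w' := by
        funext x
        show w x = c • c⁻¹ • w x
        rw [smul_smul, mul_inv_cancel₀ (ne_of_gt hc), one_smul]
      have hmemS : ‖sys.out (sys.trans s 0 w')‖ ∈ S := ⟨s, hs, w', hw', hrun', rfl⟩
      have h1 : ‖sys.out (sys.trans s 0 w')‖ ≤ sSup S := le_csSup hS_bdd hmemS
      calc ‖sys.out (sys.trans s 0 w)‖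
          = c * ‖sys.out (sys.trans s 0 w')‖ := by
            rw [hws, hsmul s hs w' hw' c, map_smul, norm_smul, Real.norm_eq_abs,
              abs_of_pos hc]
        _ ≤ 1 * sSup S := mul_le_mul hc1 h1 (norm_nonneg _) zero_le_one
        _ = sSup S := one_mul _
end
end

section
/- Let Σ = (X, Y, M(U), φ, h) be a linear control system with U ≠ {0} that is exponentially stable, robust with respect to the input, and strictly causal. Then the minimum output asymptotic gain can be computed using only periodic inputs: γ_as = sup{ limsup_{t→∞} ‖h(φ(t,0,u))‖_Y : u ∈ M_per(U), sup_{s≥0}‖u(s)‖_U = 1 }, where M_per(U) := { u ∈ M(U) : u is periodic }. -/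
open Filter

noncomputable section

section Aux

open LinearControlSystem

/-- Scaling a set of reals scales its supremum. -/
lemma sSup_image_const_mul {A : Set ℝ} {a : ℝ} (ha : 0 < a) (hne : A.Nonempty)
    (hbdd : BddAbove A) : sSup ((fun x => a * x) '' A) = a * sSup A := by
  obtain ⟨m, hm⟩ := hbdd
  have hbddi : BddAbove ((fun x => a * x) '' A) := by
    refine ⟨a * m, ?_⟩
    rintro _ ⟨x, hx, rfl⟩
    exact mul_le_mul_of_nonneg_left (hm hx) ha.le
  refine le_antisymm ?_ ?_
  · apply csSup_le (hne.image _)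
    rintro _ ⟨x, hx, rfl⟩
    exact mul_le_mul_of_nonneg_left (le_csSup ⟨m, hm⟩ hx) ha.le
  · have h1 : sSup A ≤ a⁻¹ * sSup ((fun x => a * x) '' A) := by
      apply csSup_le hne
      intro x hx
      have h2 : a * x ≤ sSup ((fun x => a * x) '' A) := le_csSup hbddi ⟨x, hx, rfl⟩
      calc x = a⁻¹ * (a * x) := by field_simp
        _ ≤ a⁻¹ * sSup ((fun x => a * x) '' A) :=
          mul_le_mul_of_nonneg_left h2 (inv_nonneg.2 ha.le)
    calc a * sSup A ≤ a * (a⁻¹ * sSup ((fun x => a * x) '' A)) :=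
          mul_le_mul_of_nonneg_left h1 ha.le
      _ = sSup ((fun x => a * x) '' A) := by field_simp

variable {X Y U : Type*}
    [NormedAddCommGroup X] [NormedSpace ℝ X]
    [NormedAddCommGroup Y] [NormedSpace ℝ Y]
    [NormedAddCommGroup U] [NormedSpace ℝ U]
    (sys : LinearControlSystem X Y U)

lemma lcs_trans_zero_zero {t : ℝ} (ht : 0 ≤ t) : sys.trans t 0 0 = 0 := by
  have h := sys.linearity t ht 0 0 0 sys.zero_mem 0 sys.zero_mem 0 0
  simpa using h

lemma lcs_trans_add {t : ℝ} (ht : 0 ≤ t) (x : X) {u : ℝ → U} (hu : u ∈ sys.inputs) :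
    sys.trans t x u = sys.trans t x 0 + sys.trans t 0 u := by
  have h := sys.linearity t ht x 0 0 sys.zero_mem u hu 1 1
  simpa using h

lemma lcs_trans_smul {t : ℝ} (ht : 0 ≤ t) {u : ℝ → U} (hu : u ∈ sys.inputs) (c : ℝ) :
    sys.trans t 0 (c • u) = c • sys.trans t 0 u := by
  have h := sys.linearity t ht 0 0 u hu 0 sys.zero_mem c 0
  simpa using h

lemma lcs_norm_le_runSup {u : ℝ → U} (hu : u ∈ sys.inputs) {s t : ℝ} (hs : 0 ≤ s)
    (hst : s ≤ t) : ‖u s‖ ≤ runSup u t :=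
  le_csSup (sys.loc_bdd u hu t) ⟨s, ⟨hs, hst⟩, rfl⟩

lemma lcs_runSup_le_one {u : ℝ → U} (h : ∀ s, 0 ≤ s → ‖u s‖ ≤ 1) (t : ℝ) :
    runSup u t ≤ 1 := by
  apply Real.sSup_le _ zero_le_one
  rintro _ ⟨s, hs, rfl⟩
  exact h s hs.1

lemma lcs_pointwise_of_supNorm_one {u : ℝ → U} (h : supNorm u = 1) :
    ∀ s, 0 ≤ s → ‖u s‖ ≤ 1 := by
  intro s hs
  have hb : BddAbove ((fun s => ‖u s‖) '' Set.Ici 0) := by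
    by_contra hb
    rw [supNorm, Real.sSup_of_not_bddAbove hb] at h
    exact one_ne_zero h.symm
  calc ‖u s‖ ≤ sSup ((fun s => ‖u s‖) '' Set.Ici 0) := le_csSup hb ⟨s, hs, rfl⟩
    _ = 1 := h

/-- Uniform bound on trajectories generated by inputs bounded by 1. -/
lemma lcs_uniform_bound {M σ : ℝ} {b : ℝ → ℝ} (hES : sys.IsES M σ) (hrob : sys.IsRobust b) :
    ∃ C, 0 < C ∧ ∀ u ∈ sys.inputs, (∀ s, 0 ≤ s → ‖u s‖ ≤ 1) →
      ∀ t, 0 ≤ t → ‖sys.trans t 0 u‖ ≤ C := by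
  obtain ⟨hM, hσ, hstab⟩ := hES
  obtain ⟨hbmono, hbnn, hbrob⟩ := hrob
  set L : ℝ := max 1 (Real.log (2 * M) / σ) with hLdef
  have hL1 : (1 : ℝ) ≤ L := le_max_left _ _
  have hL0 : 0 < L := lt_of_lt_of_le one_pos hL1
  have hML : M * Real.exp (-σ * L) ≤ 1 / 2 := by
    have hlog : Real.log (2 * M) / σ ≤ L := le_max_right _ _
    have h1 : Real.log (2 * M) ≤ σ * L := by
      rw [div_le_iff₀ hσ] at hlog; linarith [hlog]
    have h2 : (2 : ℝ) * M ≤ Real.exp (σ * L) := by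
      calc (2 : ℝ) * M = Real.exp (Real.log (2 * M)) := (Real.exp_log (by linarith)).symm
        _ ≤ Real.exp (σ * L) := Real.exp_le_exp.2 h1
    have h3 : Real.exp (-σ * L) = (Real.exp (σ * L))⁻¹ := by
      rw [← Real.exp_neg]; ring_nf
    rw [h3]
    rw [mul_inv_le_iff₀ (Real.exp_pos _)]
    linarith
  refine ⟨2 * b L + 1, by have := hbnn L; linarith, ?_⟩
  intro u hu hptw
  have key : ∀ n : ℕ, ∀ t, 0 ≤ t → t ≤ (n + 1) * L → ‖sys.trans t 0 u‖ ≤ 2 * b L := by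
    intro n
    induction n with
    | zero =>
      intro t ht htL
      simp only [Nat.cast_zero, zero_add, one_mul] at htL
      have h1 : ‖sys.trans t 0 u‖ ≤ b t * runSup u t := hbrob u hu t ht
      have h2 : b t ≤ b L := hbmono ht (le_trans zero_le_one hL1) htL
      have h3 : runSup u t ≤ 1 := lcs_runSup_le_one hptw t
      have h4 : 0 ≤ runSup u t := Real.sSup_nonneg (by rintro _ ⟨s, _, rfl⟩; positivity)
      nlinarith [hbnn t, hbnn L]
    | succ n ih =>
      intro t ht htL
      rcases le_or_gt t ((n + 1) * L) with hle | hgt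
      · exact ih t ht hle
      · set τ : ℝ := t - L with hτdef
        have hτpos : 0 < τ := by
          have : L ≤ (n + 1 : ℝ) * L := le_mul_of_one_le_left hL0.le (by push_cast; linarith)
          simp only [hτdef]; linarith
        have hτle : τ ≤ (n + 1) * L := by
          simp only [hτdef]; push_cast at htL ⊢; linarith
        have hsg := sys.semigroup 0 u hu τ t hτpos.le (by simp only [hτdef]; linarith)
        have htτ : t - τ = L := by simp [hτdef]
        rw [htτ] at hsg
        set x := sys.trans τ 0 u with hxdef
        have hδ : (fun s => u (s + τ)) ∈ sys.inputs := sys.shift_mem u hu τ hτpos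
        have hadd := lcs_trans_add sys (le_trans zero_le_one hL1) x hδ
        rw [hsg, hadd]
        have hxbd : ‖x‖ ≤ 2 * b L := ih τ hτpos.le hτle
        have h1 : ‖sys.trans L x 0‖ ≤ M * Real.exp (-σ * L) * ‖x‖ :=
          hstab x L (le_trans zero_le_one hL1)
        have h2 : ‖sys.trans L 0 (fun s => u (s + τ))‖ ≤ b L * runSup (fun s => u (s + τ)) L :=
          hbrob _ hδ L (le_trans zero_le_one hL1)
        have h3 : runSup (fun s => u (s + τ)) L ≤ 1 := by
          apply lcs_runSup_le_one
          intro s hs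
          exact hptw (s + τ) (by linarith)
        have h4 : M * Real.exp (-σ * L) * ‖x‖ ≤ (1 / 2) * (2 * b L) := by
          have hx0 : (0:ℝ) ≤ ‖x‖ := norm_nonneg _
          nlinarith [mul_pos hM (Real.exp_pos (-σ * L))]
        calc ‖sys.trans L x 0 + sys.trans L 0 (fun s => u (s + τ))‖
            ≤ ‖sys.trans L x 0‖ + ‖sys.trans L 0 (fun s => u (s + τ))‖ := norm_add_le _ _
          _ ≤ (1 / 2) * (2 * b L) + b L * 1 := by
              refine add_le_add (le_trans h1 h4) ?_
              calc ‖sys.trans L 0 (fun s => u (s + τ))‖ ≤ b L * runSup (fun s => u (s + τ)) L :=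
                    h2
                _ ≤ b L * 1 := mul_le_mul_of_nonneg_left h3 (hbnn L)
          _ = 2 * b L := by ring
  intro t ht
  obtain ⟨n, hn⟩ : ∃ n : ℕ, t ≤ (n + 1) * L := by
    refine ⟨⌊t / L⌋.toNat, ?_⟩
    have h1 : t / L < ⌊t / L⌋ + 1 := Int.lt_floor_add_one _
    have h2 : (⌊t / L⌋ : ℝ) ≤ (⌊t / L⌋.toNat : ℝ) := by
      exact_mod_cast Int.self_le_toNat _
    have h3 : t / L < (⌊t / L⌋.toNat : ℝ) + 1 := by linarith
    calc t = (t / L) * L := by field_simp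
      _ ≤ ((⌊t / L⌋.toNat : ℝ) + 1) * L := mul_le_mul_of_nonneg_right h3.le hL0.le
  have := key n t ht hn
  linarith

end Aux

set_option maxHeartbeats 1000000 in
open LinearControlSystem in
/-- Theorem 4.3, equation (4.8): for an ES, robust, strictly causal linear control system,
the minimum output asymptotic gain can be computed using only periodic inputs. -/
theorem statement_8 {X Y U : Type*}
    [NormedAddCommGroup X] [NormedSpace ℝ X]
    [NormedAddCommGroup Y] [NormedSpace ℝ Y]
    [NormedAddCommGroup U] [NormedSpace ℝ U]
    (sys : LinearControlSystem X Y U)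
    (hES : sys.ES) (hrob : sys.Robust) (hsc : sys.StrictlyCausal) :
    sys.asympGain = sSup {r | ∃ u ∈ sys.inputs, Periodic u ∧ supNorm u = 1 ∧
      r = limsup (fun t => ‖sys.out (sys.trans t 0 u)‖) atTop} := by
  clear hsc
  obtain ⟨M, σ, hESc⟩ := hES
  obtain ⟨b, hrobc⟩ := hrob
  obtain ⟨C, hC, hCbd⟩ := lcs_uniform_bound sys hESc hrobc
  obtain ⟨hM, hσ, hstab⟩ := hESc
  obtain ⟨hbmono, hbnn, hbrob⟩ := hrobc
  set K : ℝ := ‖sys.out‖ * C with hKdef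
  have hK0 : 0 ≤ K := mul_nonneg (norm_nonneg _) hC.le
  set Pset : Set ℝ := {r | ∃ u ∈ sys.inputs, Periodic u ∧ supNorm u = 1 ∧
      r = limsup (fun t => ‖sys.out (sys.trans t 0 u)‖) atTop} with hPsetdef
  set Aset : Set ℝ := {r | ∃ u ∈ sys.inputs, supNorm u = 1 ∧
      r = limsup (fun t => ‖sys.out (sys.trans t 0 u)‖) atTop} with hAsetdef
  -- basic facts about output bounds
  have hF1 : ∀ u ∈ sys.inputs, (∀ s, 0 ≤ s → ‖u s‖ ≤ 1) → ∀ t, 0 ≤ t →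
      ‖sys.out (sys.trans t 0 u)‖ ≤ K := by
    intro u hu hp t ht
    calc ‖sys.out (sys.trans t 0 u)‖ ≤ ‖sys.out‖ * ‖sys.trans t 0 u‖ :=
          ContinuousLinearMap.le_opNorm _ _
      _ ≤ ‖sys.out‖ * C := mul_le_mul_of_nonneg_left (hCbd u hu hp t ht) (norm_nonneg _)
  have hF2 : ∀ u ∈ sys.inputs, (∀ s, 0 ≤ s → ‖u s‖ ≤ 1) →
      IsBoundedUnder (· ≤ ·) atTop (fun t => ‖sys.out (sys.trans t 0 u)‖) := by
    intro u hu hp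
    refine ⟨K, ?_⟩
    rw [Filter.eventually_map]
    filter_upwards [Filter.eventually_ge_atTop (0 : ℝ)] with t ht
    exact hF1 u hu hp t ht
  have hcob : ∀ u : ℝ → U,
      IsCoboundedUnder (· ≤ ·) atTop (fun t => ‖sys.out (sys.trans t 0 u)‖) :=
    fun u => Filter.isCoboundedUnder_le_of_le atTop (fun i => norm_nonneg _)
  have hF3 : ∀ u ∈ sys.inputs, (∀ s, 0 ≤ s → ‖u s‖ ≤ 1) →
      limsup (fun t => ‖sys.out (sys.trans t 0 u)‖) atTop ≤ K := by
    intro u hu hp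
    apply Filter.limsup_le_of_le (hcob u)
    filter_upwards [Filter.eventually_ge_atTop (0 : ℝ)] with t ht
    exact hF1 u hu hp t ht
  have hF3' : ∀ u ∈ sys.inputs, (∀ s, 0 ≤ s → ‖u s‖ ≤ 1) →
      0 ≤ limsup (fun t => ‖sys.out (sys.trans t 0 u)‖) atTop := by
    intro u hu hp
    exact le_limsup_of_frequently_le
      ((Filter.Eventually.of_forall (fun t => norm_nonneg _)).frequently) (hF2 u hu hp)
  have hAbdd : BddAbove Aset := by
    refine ⟨K, ?_⟩
    rintro r ⟨u, hu, hsup, rfl⟩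
    exact hF3 u hu (lcs_pointwise_of_supNorm_one hsup)
  have hPA : Pset ⊆ Aset := by
    rintro r ⟨u, hu, _, hsup, rfl⟩
    exact ⟨u, hu, hsup, rfl⟩
  have hPbdd : BddAbove Pset := hAbdd.mono hPA
  -- Pset is nonempty
  obtain ⟨v0, hv0⟩ := sys.U_nontrivial
  obtain ⟨u₀, hu₀, hu₀0⟩ := sys.exists_input_val v0
  have hPne : Pset.Nonempty ∧ 0 ≤ sSup Pset := by
    have hwmem : (fun s : ℝ => u₀ (s - 1 * ⌊s / 1⌋)) ∈ sys.inputs :=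
      sys.periodic_ext_mem u₀ hu₀ 1 one_pos
    set w : ℝ → U := fun s => u₀ (s - 1 * ⌊s / 1⌋) with hwdef
    have harg : ∀ s : ℝ, s - 1 * ⌊s / 1⌋ = Int.fract s := by
      intro s; rw [div_one, one_mul]; rfl
    have hwfr : ∀ s : ℝ, w s = u₀ (Int.fract s) := by
      intro s
      show u₀ (s - 1 * ⌊s / 1⌋) = u₀ (Int.fract s)
      rw [harg]
    have hwptw : ∀ s : ℝ, ‖w s‖ ≤ runSup u₀ 1 := by
      intro s
      rw [hwfr]
      exact lcs_norm_le_runSup sys hu₀ (Int.fract_nonneg s) (Int.fract_lt_one s).le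
    set B : Set ℝ := (fun s => ‖w s‖) '' Set.Ici 0 with hBdef
    have hBbdd : BddAbove B := ⟨runSup u₀ 1, by rintro _ ⟨s, _, rfl⟩; exact hwptw s⟩
    have hBne : B.Nonempty := ⟨‖w 0‖, 0, Set.self_mem_Ici, rfl⟩
    have hw0 : w 0 = v0 := by rw [hwfr]; simpa using hu₀0
    set m : ℝ := supNorm w with hmdef
    have hmB : m = sSup B := rfl
    have hm0 : 0 < m := by
      have h1 : ‖v0‖ ≤ m := by
        rw [hmB]
        refine le_csSup hBbdd ⟨0, Set.self_mem_Ici, ?_⟩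
        show ‖w 0‖ = ‖v0‖
        rw [hw0]
      have h2 : 0 < ‖v0‖ := norm_pos_iff.2 hv0
      linarith
    have hzmem : m⁻¹ • w ∈ sys.inputs := sys.smul_mem w hwmem m⁻¹
    have hzper : Periodic (m⁻¹ • w) := by
      refine ⟨1, one_pos, fun s _ => ?_⟩
      simp only [Pi.smul_apply]
      congr 1
      rw [hwfr, hwfr, Int.fract_add_one]
    have hnormsmul : ∀ s : ℝ, ‖(m⁻¹ • w) s‖ = m⁻¹ * ‖w s‖ := by
      intro s
      rw [Pi.smul_apply, norm_smul, Real.norm_eq_abs, abs_of_pos (inv_pos.2 hm0)]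
    have hzsup : supNorm (m⁻¹ • w) = 1 := by
      have him : (fun s => ‖(m⁻¹ • w) s‖) '' Set.Ici 0 = (fun x => m⁻¹ * x) '' B := by
        rw [hBdef, Set.image_image]
        apply Set.image_congr
        intro s _
        show ‖(m⁻¹ • w) s‖ = m⁻¹ * ‖w s‖
        exact hnormsmul s
      rw [supNorm, him, sSup_image_const_mul (inv_pos.2 hm0) hBne hBbdd, ← hmB,
        inv_mul_cancel₀ hm0.ne']
    have hmem : limsup (fun t => ‖sys.out (sys.trans t 0 (m⁻¹ • w))‖) atTop ∈ Pset := by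
      rw [hPsetdef]
      exact ⟨m⁻¹ • w, hzmem, hzper, hzsup, rfl⟩
    have h0 : 0 ≤ limsup (fun t => ‖sys.out (sys.trans t 0 (m⁻¹ • w))‖) atTop :=
      hF3' _ hzmem (lcs_pointwise_of_supNorm_one hzsup)
    exact ⟨⟨_, hmem⟩, le_trans h0 (le_csSup hPbdd hmem)⟩
  obtain ⟨hPne, hSP0⟩ := hPne
  have goal1 : sSup Pset ≤ sys.asympGain := csSup_le_csSup hAbdd hPne hPA
  have goal2 : sys.asympGain ≤ sSup Pset := by
    apply Real.sSup_le _ hSP0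
    rintro r ⟨u, hu, hsup, rfl⟩
    set ℓ := limsup (fun t => ‖sys.out (sys.trans t 0 u)‖) atTop with hℓdef
    apply le_of_forall_pos_le_add
    intro ε hε
    have ptwu := lcs_pointwise_of_supNorm_one hsup
    set D : ℝ := K * M with hDdef
    have hD0 : 0 ≤ D := mul_nonneg hK0 hM.le
    set T₀ : ℝ := max 1 (Real.log (2 * (D + 1) / ε) / σ) with hT₀def
    have hT₀1 : (1 : ℝ) ≤ T₀ := le_max_left _ _
    have hdecay : ∀ t, T₀ ≤ t → D * Real.exp (-σ * t) ≤ ε / 2 := by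
      intro t htt
      have h1 : Real.log (2 * (D + 1) / ε) / σ ≤ t := le_trans (le_max_right _ _) htt
      have h2 : Real.log (2 * (D + 1) / ε) ≤ σ * t := by
        rw [div_le_iff₀ hσ] at h1; linarith
      have hpos : 0 < 2 * (D + 1) / ε := by positivity
      have h3 : 2 * (D + 1) / ε ≤ Real.exp (σ * t) :=
        calc 2 * (D + 1) / ε = Real.exp (Real.log (2 * (D + 1) / ε)) :=
              (Real.exp_log hpos).symm
          _ ≤ Real.exp (σ * t) := Real.exp_le_exp.2 h2
      have h4 : Real.exp (-σ * t) ≤ ε / (2 * (D + 1)) := by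
        have h5 : Real.exp (-σ * t) * (2 * (D + 1) / ε) ≤ 1 := by
          have h6 := mul_le_mul_of_nonneg_left h3 (Real.exp_pos (-σ * t)).le
          have h7 : Real.exp (-σ * t) * Real.exp (σ * t) = 1 := by
            rw [← Real.exp_add, show -σ * t + σ * t = 0 by ring, Real.exp_zero]
          rw [h7] at h6
          exact h6
        have h6 := mul_le_mul_of_nonneg_right h5 hε.le
        have h7 : Real.exp (-σ * t) * (2 * (D + 1) / ε) * ε
            = Real.exp (-σ * t) * (2 * (D + 1)) := by field_simp
        rw [h7, one_mul] at h6
        rw [le_div_iff₀ (by positivity : (0:ℝ) < 2 * (D + 1))]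
        linarith
      have h8 : D * (ε / (2 * (D + 1))) ≤ ε / 2 := by
        rw [mul_div_assoc', div_le_div_iff₀ (by positivity : (0:ℝ) < 2 * (D + 1)) two_pos]
        nlinarith
      calc D * Real.exp (-σ * t) ≤ D * (ε / (2 * (D + 1))) :=
            mul_le_mul_of_nonneg_left h4 hD0
        _ ≤ ε / 2 := h8
    have hfreq : ∃ᶠ t in atTop, ℓ - ε / 2 < ‖sys.out (sys.trans t 0 u)‖ :=
      frequently_lt_of_lt_limsup (hcob u) (by linarith)
    obtain ⟨t, hft, htT₀⟩ := (hfreq.and_eventually (Filter.eventually_ge_atTop T₀)).exists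
    have ht0 : 0 < t := lt_of_lt_of_le one_pos (le_trans hT₀1 htT₀)
    set c : ℝ := runSup u t with hcdef
    have hc1 : c ≤ 1 := lcs_runSup_le_one ptwu t
    have hc0 : 0 ≤ c := Real.sSup_nonneg (by rintro _ ⟨s, _, rfl⟩; positivity)
    rcases eq_or_lt_of_le hc0 with hczero | hcpos
    · -- runSup u t = 0 : output at time t is 0
      have huz : ∀ s, 0 ≤ s → s ≤ t → u s = (0 : ℝ → U) s := by
        intro s hs hst
        have h1 : ‖u s‖ ≤ c := lcs_norm_le_runSup sys hu hs hst
        have : ‖u s‖ = 0 := le_antisymm (by linarith [hczero]) (norm_nonneg _)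
        simpa [norm_eq_zero] using this
      have h2 : sys.trans t 0 u = sys.trans t 0 0 :=
        sys.causality t ht0.le 0 u hu 0 sys.zero_mem huz
      have h3 : ‖sys.out (sys.trans t 0 u)‖ = 0 := by
        rw [h2, lcs_trans_zero_zero sys ht0.le]
        simp
      rw [h3] at hft
      linarith
    · -- runSup u t = c > 0
      set u' : ℝ → U := c⁻¹ • u with hu'def
      have hu' : u' ∈ sys.inputs := sys.smul_mem u hu c⁻¹
      have hptwu' : ∀ s, 0 ≤ s → s ≤ t → ‖u' s‖ ≤ 1 := by
        intro s hs hst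
        have h1 : ‖u s‖ ≤ c := lcs_norm_le_runSup sys hu hs hst
        have h2 : ‖u' s‖ = c⁻¹ * ‖u s‖ := by
          rw [hu'def, Pi.smul_apply, norm_smul, Real.norm_eq_abs,
            abs_of_pos (inv_pos.2 hcpos)]
        rw [h2]
        calc c⁻¹ * ‖u s‖ ≤ c⁻¹ * c := mul_le_mul_of_nonneg_left h1 (inv_pos.2 hcpos).le
          _ = 1 := inv_mul_cancel₀ hcpos.ne'
      have hr₀ : ℓ - ε / 2 < ‖sys.out (sys.trans t 0 u')‖ := by
        have h1 : sys.trans t 0 u' = c⁻¹ • sys.trans t 0 u :=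
          lcs_trans_smul sys ht0.le hu c⁻¹
        have h2 : ‖sys.out (sys.trans t 0 u')‖ = c⁻¹ * ‖sys.out (sys.trans t 0 u)‖ := by
          rw [h1, map_smul, norm_smul, Real.norm_eq_abs, abs_of_pos (inv_pos.2 hcpos)]
        rw [h2]
        have h3 : (1 : ℝ) ≤ c⁻¹ := (one_le_inv₀ hcpos).2 hc1
        nlinarith [norm_nonneg (sys.out (sys.trans t 0 u)), hft]
      -- periodic construction
      set P : ℝ := t + 1 with hPdef
      have hP0 : 0 < P := by rw [hPdef]; linarith
      have htP : t < P := by rw [hPdef]; linarith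
      have hwmem : (fun s : ℝ => if s ≤ t then u' s else (0 : ℝ → U) (s - t)) ∈ sys.inputs :=
        sys.concat_le_mem u' hu' 0 sys.zero_mem t ht0
      set w : ℝ → U := fun s => if s ≤ t then u' s else (0 : ℝ → U) (s - t) with hwdef
      have hwle : ∀ s, s ≤ t → w s = u' s := by
        intro s hs
        show (if s ≤ t then u' s else (0 : ℝ → U) (s - t)) = u' s
        rw [if_pos hs]
      have hwgt : ∀ s, ¬ (s ≤ t) → w s = 0 := by
        intro s hs
        show (if s ≤ t then u' s else (0 : ℝ → U) (s - t)) = 0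
        rw [if_neg hs]
        rfl
      have hwptw : ∀ s, 0 ≤ s → ‖w s‖ ≤ 1 := by
        intro s hs
        by_cases hst : s ≤ t
        · rw [hwle s hst]; exact hptwu' s hs hst
        · rw [hwgt s hst]; simp
      have hvmem : (fun s : ℝ => w (s - P * ⌊s / P⌋)) ∈ sys.inputs :=
        sys.periodic_ext_mem w hwmem P hP0
      set v : ℝ → U := fun s => w (s - P * ⌊s / P⌋) with hvdef
      have hfr : ∀ s : ℝ, 0 ≤ s - P * ⌊s / P⌋ ∧ s - P * ⌊s / P⌋ < P := by
        intro s
        have h1 : (⌊s / P⌋ : ℝ) ≤ s / P := Int.floor_le _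
        have h2 : s / P < ⌊s / P⌋ + 1 := Int.lt_floor_add_one _
        constructor
        · have h3 : P * (⌊s / P⌋ : ℝ) ≤ P * (s / P) := mul_le_mul_of_nonneg_left h1 hP0.le
          have h4 : P * (s / P) = s := by field_simp
          linarith
        · have h3 : P * (s / P) < P * ((⌊s / P⌋ : ℝ) + 1) := by
            exact mul_lt_mul_of_pos_left h2 hP0
          have h4 : P * (s / P) = s := by field_simp
          nlinarith
      have hveq : ∀ s, 0 ≤ s → s < P → v s = w s := by
        intro s hs hsP
        have h1 : ⌊s / P⌋ = 0 := Int.floor_eq_zero_iff.2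
          ⟨div_nonneg hs hP0.le, (div_lt_one hP0).2 hsP⟩
        show w (s - P * ⌊s / P⌋) = w s
        rw [h1]
        norm_num
      have hvper1 : ∀ s : ℝ, v (s + P) = v s := by
        intro s
        have h1 : (s + P) / P = s / P + 1 := by field_simp
        have h2 : ⌊(s + P) / P⌋ = ⌊s / P⌋ + 1 := by rw [h1, Int.floor_add_one]
        show w (s + P - P * ⌊(s + P) / P⌋) = w (s - P * ⌊s / P⌋)
        rw [h2]
        congr 1
        push_cast
        ring
      have hvperN : ∀ k : ℕ, ∀ s : ℝ, v (s + k * P) = v s := by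
        intro k
        induction k with
        | zero => intro s; simp
        | succ k ih =>
          intro s
          have h1 : s + (k + 1 : ℕ) * P = (s + k * P) + P := by push_cast; ring
          rw [h1, hvper1, ih]
      have hvptw : ∀ s, 0 ≤ s → ‖v s‖ ≤ 1 := by
        intro s _
        show ‖w (s - P * ⌊s / P⌋)‖ ≤ 1
        exact hwptw _ (hfr s).1
      have hru' : runSup u' t = 1 := by
        have hAne : ((fun s => ‖u s‖) '' Set.Icc 0 t).Nonempty :=
          ⟨‖u 0‖, 0, ⟨le_refl 0, ht0.le⟩, rfl⟩
        have him : (fun s => ‖u' s‖) '' Set.Icc 0 t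
            = (fun x => c⁻¹ * x) '' ((fun s => ‖u s‖) '' Set.Icc 0 t) := by
          rw [Set.image_image]
          apply Set.image_congr
          intro s _
          show ‖u' s‖ = c⁻¹ * ‖u s‖
          rw [hu'def, Pi.smul_apply, norm_smul, Real.norm_eq_abs,
            abs_of_pos (inv_pos.2 hcpos)]
        rw [runSup, him, sSup_image_const_mul (inv_pos.2 hcpos) hAne (sys.loc_bdd u hu t)]
        rw [← runSup, ← hcdef, inv_mul_cancel₀ hcpos.ne']
      have hvsup : supNorm v = 1 := by
        refine le_antisymm ?_ ?_
        · apply Real.sSup_le _ zero_le_one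
          rintro _ ⟨s, hs, rfl⟩
          exact hvptw s hs
        · rw [← hru', runSup]
          have hvB : BddAbove ((fun s => ‖v s‖) '' Set.Ici 0) :=
            ⟨1, by rintro _ ⟨s, hs, rfl⟩; exact hvptw s hs⟩
          have hne' : ((fun s => ‖u' s‖) '' Set.Icc 0 t).Nonempty :=
            ⟨‖u' 0‖, 0, ⟨le_refl 0, ht0.le⟩, rfl⟩
          apply csSup_le_csSup hvB hne'
          rintro _ ⟨s, ⟨hs0, hst⟩, rfl⟩
          refine ⟨s, hs0, ?_⟩
          show ‖v s‖ = ‖u' s‖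
          rw [hveq s hs0 (lt_of_le_of_lt hst htP), hwle s hst]
      have hvPer : Periodic v := ⟨P, hP0, fun s _ => hvper1 s⟩
      have hmemP : limsup (fun s => ‖sys.out (sys.trans s 0 v)‖) atTop ∈ Pset := by
        rw [hPsetdef]
        exact ⟨v, hvmem, hvPer, hvsup, rfl⟩
      -- key estimate along the sequence k*P + t
      have hkey : ∀ k : ℕ, 1 ≤ k → ℓ - ε ≤ ‖sys.out (sys.trans ((k : ℝ) * P + t) 0 v)‖ := by
        intro k hk
        have hkP0 : 0 < (k : ℝ) * P := by
          have : (1 : ℝ) ≤ (k : ℝ) := by exact_mod_cast hk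
          nlinarith
        have hsg := sys.semigroup 0 v hvmem ((k : ℝ) * P) ((k : ℝ) * P + t) hkP0.le
          (by linarith)
        have h1 : ((k : ℝ) * P + t) - (k : ℝ) * P = t := by ring
        rw [h1] at hsg
        set x := sys.trans ((k : ℝ) * P) 0 v with hxdef
        have hδ : (fun s => v (s + (k : ℝ) * P)) ∈ sys.inputs :=
          sys.shift_mem v hvmem ((k : ℝ) * P) hkP0
        have hcaus : sys.trans t x (fun s => v (s + (k : ℝ) * P)) = sys.trans t x u' := by
          apply sys.causality t ht0.le x _ hδ u' hu'
          intro s hs hst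
          calc v (s + (k : ℝ) * P) = v s := hvperN k s
            _ = w s := hveq s hs (lt_of_le_of_lt hst htP)
            _ = u' s := hwle s hst
        have hadd : sys.trans t x u' = sys.trans t x 0 + sys.trans t 0 u' :=
          lcs_trans_add sys ht0.le x hu'
        have hxbd : ‖x‖ ≤ C := hCbd v hvmem hvptw ((k : ℝ) * P) hkP0.le
        have hstabx : ‖sys.trans t x 0‖ ≤ M * Real.exp (-σ * t) * ‖x‖ := hstab x t ht0.le
        have hout : ‖sys.out (sys.trans t x 0)‖ ≤ D * Real.exp (-σ * t) := by
          calc ‖sys.out (sys.trans t x 0)‖ ≤ ‖sys.out‖ * ‖sys.trans t x 0‖ :=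
                ContinuousLinearMap.le_opNorm _ _
            _ ≤ ‖sys.out‖ * (M * Real.exp (-σ * t) * C) := by
                refine mul_le_mul_of_nonneg_left ?_ (norm_nonneg _)
                calc ‖sys.trans t x 0‖ ≤ M * Real.exp (-σ * t) * ‖x‖ := hstabx
                  _ ≤ M * Real.exp (-σ * t) * C := by
                      refine mul_le_mul_of_nonneg_left hxbd ?_
                      positivity
            _ = D * Real.exp (-σ * t) := by rw [hDdef, hKdef]; ring
        have hlow : ‖sys.out (sys.trans t 0 u')‖ - ‖sys.out (sys.trans t x 0)‖
            ≤ ‖sys.out (sys.trans t x 0) + sys.out (sys.trans t 0 u')‖ := by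
          have h2 := norm_sub_le (sys.out (sys.trans t x 0) + sys.out (sys.trans t 0 u'))
            (sys.out (sys.trans t x 0))
          rw [add_sub_cancel_left] at h2
          linarith
        have hcomp : sys.out (sys.trans ((k : ℝ) * P + t) 0 v)
            = sys.out (sys.trans t x 0) + sys.out (sys.trans t 0 u') := by
          rw [hsg, hcaus, hadd, map_add]
        rw [hcomp]
        have hde : D * Real.exp (-σ * t) ≤ ε / 2 := hdecay t htT₀
        linarith
      have hfreq2 : ∃ᶠ s in atTop, ℓ - ε ≤ ‖sys.out (sys.trans s 0 v)‖ := by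
        rw [Filter.frequently_atTop]
        intro a
        set k : ℕ := max 1 ⌈a⌉₊ with hkdef
        have hk1 : 1 ≤ k := le_max_left _ _
        refine ⟨(k : ℝ) * P + t, ?_, hkey k hk1⟩
        have h1 : a ≤ (⌈a⌉₊ : ℝ) := Nat.le_ceil a
        have h2 : ((⌈a⌉₊ : ℕ) : ℝ) ≤ (k : ℝ) := by exact_mod_cast le_max_right 1 ⌈a⌉₊
        have h3 : (k : ℝ) ≤ (k : ℝ) * P := by
          have hk0 : (0 : ℝ) ≤ (k : ℝ) := Nat.cast_nonneg _
          nlinarith [htP, ht0]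
        linarith
      have hlim : ℓ - ε ≤ limsup (fun s => ‖sys.out (sys.trans s 0 v)‖) atTop :=
        le_limsup_of_frequently_le hfreq2 (hF2 v hvmem hvptw)
      have hfin : limsup (fun s => ‖sys.out (sys.trans s 0 v)‖) atTop ≤ sSup Pset :=
        le_csSup hPbdd hmemP
      linarith
  exact le_antisymm goal2 goal1
end
end
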